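/- arXiv:1204.4925 — 12 statements merged into one kernel-verified Lean document; each statement's English description precedes it below -/
import Mathlib

section
/- Let A be a semisimple complex unital Banach algebra and let e ∈ A. Then the following are equivalent: (i) σ(e·x) ⊆ σ(x) ∪ {0} for all x ∈ A; (ii) e is an idempotent lying in the center of A (i.e., e² = e and e·x = x·e for all x ∈ A). -/
/-!
The spectral condition on `e` says exactly that `u ↦ 1 - e + e u` maps units to units. Let `L` be
a maximal left ideal and `M = A ⧸ L`. If `m` and `e • m` were linearly independent, Schur's lemma
and Gelfand–Mazur (for the bounded operators on the Banach space `M`) would give some `a`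
annihilating `m` but not `e • m`, and then, `M` being simple, some `w` with `w • m = 0` and
`w • e • m = -m`. Then `exp w • e • m = e • m - m`, so the unit `1 - e + e exp w` kills
`e • m ≠ 0`, which is absurd. Hence `e` acts on each `A ⧸ L` as a scalar, which lies in
`σ(e) ⊆ {0, 1}`; so `e² - e` and all `e v - v e` annihilate every simple module, i.e. lie in the
Jacobson radical, which is zero by semisimplicity.
-/

section Units

variable {𝕜 R : Type*} [Field 𝕜] [Ring R] [Algebra 𝕜 R]

theorem one_sub_add_mul_mul_one_sub_add_mul {e v w : R} (he : IsIdempotentElem e)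
    (hv : Commute e v) : (1 - e + e * v) * (1 - e + e * w) = 1 - e + e * (v * w) := by
  have h1 : e * (1 - e) = 0 := by rw [mul_sub, mul_one, he.eq, sub_self]
  have h2 : (1 - e) * e = 0 := by rw [sub_mul, one_mul, he.eq, sub_self]
  calc (1 - e + e * v) * (1 - e + e * w)
      = (1 - e) * (1 - e) + (1 - e) * e * w + v * (e * (1 - e)) + v * (e * e) * w := by
        rw [hv.eq]; noncomm_ring
    _ = 1 - e + v * e * w := by rw [h1, h2, he.eq, he.one_sub.eq]; noncomm_ring
    _ = 1 - e + e * (v * w) := by rw [← hv.eq, mul_assoc]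

theorem isUnit_one_sub_add_mul {e u : R} (he : IsIdempotentElem e) (hu : IsUnit u)
    (hcomm : Commute e u) : IsUnit (1 - e + e * u) := by
  obtain ⟨u, rfl⟩ := hu
  refine ⟨⟨1 - e + e * u, 1 - e + e * ↑u⁻¹, ?_, ?_⟩, rfl⟩
  · rw [one_sub_add_mul_mul_one_sub_add_mul he hcomm, u.mul_inv, mul_one, sub_add_cancel]
  · rw [one_sub_add_mul_mul_one_sub_add_mul he hcomm.units_inv_right, u.inv_mul, mul_one,
      sub_add_cancel]

theorem spectrum_mul_subset_union_zero_iff {e : R} :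
    (∀ x, spectrum 𝕜 (e * x) ⊆ spectrum 𝕜 x ∪ {0}) ↔
      ∀ u, IsUnit u → IsUnit (1 - e + e * u) := by
  constructor
  · intro h u hu
    have h1 : (1 : 𝕜) ∉ spectrum 𝕜 (1 - u) := by
      rw [spectrum.notMem_iff, map_one, sub_sub_cancel]
      exact hu
    have h2 : (1 : 𝕜) ∉ spectrum 𝕜 (e * (1 - u)) := fun h1' =>
      (h (1 - u) h1').elim h1 one_ne_zero
    rw [spectrum.notMem_iff, map_one] at h2
    convert h2 using 1
    noncomm_ring
  · intro h x k hk
    by_contra! hkx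
    rw [Set.mem_union, Set.mem_singleton_iff, not_or, spectrum.notMem_iff] at hkx
    obtain ⟨hx, hk0⟩ := hkx
    refine spectrum.mem_iff.mp hk ?_
    have hcancel (y : R) : algebraMap 𝕜 R k * (e * (algebraMap 𝕜 R k⁻¹ * y)) = e * y := by
      rw [← mul_assoc, Algebra.commutes, mul_assoc, ← mul_assoc (algebraMap 𝕜 R k),
        ← map_mul, mul_inv_cancel₀ hk0, map_one, one_mul]
    have hfactor : algebraMap 𝕜 R k - e * x
        = algebraMap 𝕜 R k * (1 - e + e * (algebraMap 𝕜 R k⁻¹ * (algebraMap 𝕜 R k - x))) := by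
      rw [mul_add, hcancel, mul_sub, mul_one, Algebra.commutes k e]
      noncomm_ring
    rw [hfactor]
    exact ((Ne.isUnit hk0).map _).mul (h _ (((Ne.isUnit (inv_ne_zero hk0)).map _).mul hx))

theorem spectrum_subset_zero_one {e : R} (h : ∀ x, spectrum 𝕜 (e * x) ⊆ spectrum 𝕜 x ∪ {0}) :
    spectrum 𝕜 e ⊆ {0, 1} := by
  rcases subsingleton_or_nontrivial R with _ | _
  · simp [spectrum.of_subsingleton]
  · intro k hk
    rcases h 1 (by rwa [mul_one]) with hk1 | hk0
    · rw [spectrum.one_eq] at hk1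
      exact Or.inr hk1
    · exact Or.inl hk0

theorem mem_spectrum_of_forall_smul_eq {M : Type*} [AddCommGroup M] [Nontrivial M] [Module R M]
    [Module 𝕜 M] [IsScalarTower 𝕜 R M] {e : R} {γ : 𝕜} (h : ∀ m : M, e • m = γ • m) :
    γ ∈ spectrum 𝕜 e := by
  intro hunit
  obtain ⟨m, hm⟩ := exists_ne (0 : M)
  refine hm (hunit.smul_left_cancel.mp ?_)
  rw [sub_smul, algebraMap_smul, h, sub_self, smul_zero]

end Units

section Jacobson

theorem isUnit_add_one_of_mem_jacobson {R : Type*} [Ring R] {d : R} (hd : d ∈ Ring.jacobson R) :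
    IsUnit (d + 1) := by
  rw [← Ideal.jacobson_bot] at hd
  obtain ⟨s, hs⟩ := Ideal.exists_mul_add_sub_mem_of_mem_jacobson d hd
  rw [Submodule.mem_bot, sub_eq_zero] at hs
  obtain ⟨t, ht⟩ := Ideal.exists_mul_add_sub_mem_of_mem_jacobson (-(s * d))
    (neg_mem (Ideal.mul_mem_left _ s hd))
  rw [Submodule.mem_bot, sub_eq_zero] at ht
  have hs' : -(s * d) + 1 = s := by rw [← hs]; noncomm_ring
  have hts : t * s = 1 := by rw [← hs', ht]
  have htd : t = d + 1 := calc
    t = t * (s * (d + 1)) := by rw [hs, mul_one]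
    _ = d + 1 := by rw [← mul_assoc, hts, one_mul]
  exact ⟨⟨d + 1, s, by rw [← htd, hts], hs⟩, rfl⟩

theorem spectrum_subset_zero_of_mem_jacobson {𝕜 R : Type*} [Field 𝕜] [Ring R] [Algebra 𝕜 R]
    {d : R} (hd : d ∈ Ring.jacobson R) : spectrum 𝕜 d ⊆ {0} := by
  intro k hk
  rw [Set.mem_singleton_iff]
  by_contra hk0
  refine spectrum.mem_iff.mp hk ?_
  have hfactor : algebraMap 𝕜 R k - d = algebraMap 𝕜 R k * (-(k⁻¹ • d) + 1) := by
    rw [mul_add, mul_one, mul_neg, mul_smul_comm, ← smul_eq_mul, algebraMap_smul, smul_smul,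
      inv_mul_cancel₀ hk0, one_smul]
    abel
  rw [hfactor]
  exact ((Ne.isUnit hk0).map _).mul
    (isUnit_add_one_of_mem_jacobson (neg_mem (Submodule.smul_of_tower_mem _ _ hd)))

end Jacobson

instance Ideal.IsMaximal.isSimpleModule_quotient {R : Type*} [Ring R] (L : Ideal R)
    [hL : L.IsMaximal] : IsSimpleModule R (R ⧸ L) :=
  isSimpleModule_iff_isCoatom.mpr hL.out

theorem continuous_of_linearMap_quotient {R : Type*} [NormedRing R] (L : Ideal R)
    (f : (R ⧸ L) →ₗ[R] (R ⧸ L)) : Continuous f := by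
  obtain ⟨v, hv⟩ := Submodule.Quotient.mk_surjective L (f (Submodule.Quotient.mk 1))
  have hf : ⇑f ∘ L.mkQ = L.mkQ ∘ (· * v) := by
    ext x
    calc f (Submodule.Quotient.mk x) = f (x • Submodule.Quotient.mk 1) := by
          rw [← Submodule.Quotient.mk_smul, smul_eq_mul, mul_one]
      _ = Submodule.Quotient.mk (x * v) := by
          rw [map_smul, ← hv, ← Submodule.Quotient.mk_smul, smul_eq_mul]
  rw [← (Submodule.isOpenQuotientMap_mkQ L).continuous_comp_iff, hf]
  exact (Submodule.isOpenQuotientMap_mkQ L).continuous.comp (continuous_mul_const v)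

section BanachAlgebra

variable {A : Type*} [NormedRing A] [NormedAlgebra ℂ A] [CompleteSpace A]

theorem exp_smul_eq_add_smul {M : Type*} [AddCommGroup M] [Module A M] [TopologicalSpace M]
    [T2Space M] [ContinuousSMul A M] {w : A} {x : M} (hx : w • w • x = 0) :
    NormedSpace.exp w • x = x + w • x := by
  have hvanish : ∀ n ∉ Finset.range 2, ((n.factorial : ℂ)⁻¹ • w ^ n) • x = 0 := by
    intro n hn
    obtain ⟨k, rfl⟩ : ∃ k, n = k + 2 := ⟨n - 2, by simp at hn; omega⟩
    rw [← smul_one_mul _ (w ^ (k + 2)), mul_smul, pow_add, mul_smul, pow_two, mul_smul, hx,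
      smul_zero, smul_zero]
  refine ((NormedSpace.exp_series_hasSum_exp' (𝕂 := ℂ) w).smul_const x).unique ?_
  simpa [Finset.sum_range_succ] using
    hasSum_sum_of_ne_finset_zero (L := SummationFilter.unconditional ℕ) hvanish

theorem exists_forall_apply_eq_smul_of_linearMap_quotient (L : Ideal A) [L.IsMaximal]
    (f : (A ⧸ L) →ₗ[A] (A ⧸ L)) : ∃ γ : ℂ, ∀ m, f m = γ • m := by
  have := IsSimpleModule.nontrivial A (A ⧸ L)
  let F : (A ⧸ L) →L[ℂ] (A ⧸ L) := ⟨f.restrictScalars ℂ, continuous_of_linearMap_quotient L f⟩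
  have hF : ∀ x, F x = f x := fun _ => rfl
  obtain ⟨μ, hμ⟩ := spectrum.nonempty F
  refine ⟨μ, fun m => ?_⟩
  rcases (f - μ • LinearMap.id).bijective_or_eq_zero with hbij | hzero
  · refine absurd ?_ (spectrum.mem_iff.mp hμ)
    rw [← neg_sub]
    refine IsUnit.neg (ContinuousLinearMap.isUnit_iff_bijective.mpr ?_)
    convert hbij using 1
    ext x
    simp [hF, Algebra.algebraMap_eq_smul_one]
  · simpa [sub_eq_zero] using LinearMap.congr_fun hzero m

theorem exists_eq_smul_of_forall_smul_eq_zero (L : Ideal A) [L.IsMaximal] {m n : A ⧸ L}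
    (hm : m ≠ 0) (hmn : ∀ a : A, a • m = 0 → a • n = 0) : ∃ γ : ℂ, n = γ • m := by
  let g := LinearMap.toSpanSingleton A (A ⧸ L) m
  have hg : Function.Surjective g := IsSimpleModule.toSpanSingleton_surjective A hm
  let f := (LinearMap.ker g).liftQ (LinearMap.toSpanSingleton A (A ⧸ L) n) (fun a ha => hmn a ha)
    ∘ₗ (g.quotKerEquivOfSurjective hg).symm.toLinearMap
  obtain ⟨γ, hγ⟩ := exists_forall_apply_eq_smul_of_linearMap_quotient L f
  have hfm : f m = n := by
    have hm1 : g 1 = m := one_smul A m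
    rw [← hm1]
    simp only [f, LinearMap.coe_comp, LinearEquiv.coe_coe, Function.comp_apply,
      LinearMap.quotKerEquivOfSurjective_symm_apply]
    exact one_smul A n
  exact ⟨γ, by rw [← hfm, hγ]⟩

theorem not_linearIndependent_smul {e : A} (he : ∀ u : A, IsUnit u → IsUnit (1 - e + e * u))
    (L : Ideal A) [L.IsMaximal] (m : A ⧸ L) : ¬ LinearIndependent ℂ ![m, e • m] := by
  intro hli
  have hm : m ≠ 0 := hli.ne_zero 0
  have hem : e • m ≠ 0 := hli.ne_zero 1
  obtain ⟨a, ham, haem⟩ : ∃ a : A, a • m = 0 ∧ a • e • m ≠ 0 := by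
    by_contra! h
    obtain ⟨γ, hγ⟩ := exists_eq_smul_of_forall_smul_eq_zero L hm h
    exact one_ne_zero (LinearIndependent.pair_iff.mp hli (-γ) 1
      (by rw [hγ, one_smul, neg_smul, neg_add_cancel])).2
  obtain ⟨b, hb⟩ := IsSimpleModule.toSpanSingleton_surjective A haem (-m)
  have hwm : (b * a) • m = 0 := by rw [mul_smul, ham, smul_zero]
  have hwem : (b * a) • e • m = -m := by rw [mul_smul]; exact hb
  have hexp : NormedSpace.exp (b * a) • e • m = e • m - m := by
    rw [exp_smul_eq_add_smul (by rw [hwem, smul_neg, hwm, neg_zero]), hwem, sub_eq_add_neg]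
  have hkill : (1 - e + e * NormedSpace.exp (b * a)) • e • m = 0 := by
    rw [add_smul, sub_smul, one_smul, mul_smul, hexp, smul_sub]
    abel
  have hunit := he _ (NormedSpace.isUnit_exp_of_mem_ball (𝕂 := ℂ) (x := b * a)
    ((NormedSpace.expSeries_radius_eq_top ℂ A).symm ▸ edist_lt_top _ _))
  exact hem (hunit.smul_left_cancel.mp (by rw [hkill, smul_zero]))

theorem exists_idempotent_forall_smul_eq {e : A}
    (hi : ∀ x : A, spectrum ℂ (e * x) ⊆ spectrum ℂ x ∪ {0}) (L : Ideal A) [L.IsMaximal] :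
    ∃ γ : ℂ, γ * γ = γ ∧ ∀ m : A ⧸ L, e • m = γ • m := by
  have := IsSimpleModule.nontrivial A (A ⧸ L)
  obtain ⟨γ, hγ⟩ := LinearMap.exists_eq_smul_id_of_forall_notLinearIndependent
    (f := DistribSMul.toLinearMap ℂ (A ⧸ L) e)
    (not_linearIndependent_smul (spectrum_mul_subset_union_zero_iff.mp hi) L)
  have hγe : ∀ m : A ⧸ L, e • m = γ • m := fun m => LinearMap.congr_fun hγ m
  refine ⟨γ, ?_, hγe⟩
  rcases spectrum_subset_zero_one hi (mem_spectrum_of_forall_smul_eq hγe) with rfl | rfl <;>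
    norm_num

theorem mul_self_sub_mem_and_commutator_mem {e : A}
    (hi : ∀ x : A, spectrum ℂ (e * x) ⊆ spectrum ℂ x ∪ {0}) (L : Ideal A) [L.IsMaximal] :
    e * e - e ∈ L ∧ ∀ v, e * v - v * e ∈ L := by
  obtain ⟨γ, hγγ, hγ⟩ := exists_idempotent_forall_smul_eq hi L
  have hmem : ∀ c : A, c • (Submodule.Quotient.mk 1 : A ⧸ L) = 0 → c ∈ L := fun c hc => by
    rwa [← Submodule.Quotient.mk_smul, smul_eq_mul, mul_one, Submodule.Quotient.mk_eq_zero] at hc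
  refine ⟨hmem _ ?_, fun v => hmem _ ?_⟩
  · rw [sub_smul, mul_smul, hγ, hγ, smul_smul, hγγ, sub_self]
  · rw [sub_smul, mul_smul, mul_smul, hγ, hγ, smul_comm v γ, sub_self]

theorem eq_zero_of_forall_isMaximal_mem
    (hss : ∀ a : A, (∀ x : A, spectrum ℂ (a * x) = {0}) → a = 0) {c : A}
    (hc : ∀ L : Ideal A, L.IsMaximal → c ∈ L) : c = 0 := by
  rcases subsingleton_or_nontrivial A with _ | _
  · exact Subsingleton.elim _ _
  have hcJ : c ∈ Ring.jacobson A := by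
    rw [Ring.jacobson_eq_sInf_isMaximal]
    exact Submodule.mem_sInf.mpr hc
  exact hss c fun x => (spectrum.nonempty (c * x)).subset_singleton_iff.mp
    (spectrum_subset_zero_of_mem_jacobson (Ideal.mul_mem_right x _ hcJ))

end BanachAlgebra

theorem spectral_characterization_central_idempotent_general
    {A : Type*} [NormedRing A] [NormedAlgebra ℂ A] [CompleteSpace A]
    (hss : ∀ a : A, (∀ x : A, spectrum ℂ (a * x) = {0}) → a = 0)
    (e : A) :
    (∀ x : A, spectrum ℂ (e * x) ⊆ spectrum ℂ x ∪ {0}) ↔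
      (e * e = e ∧ ∀ x : A, e * x = x * e) := by
  constructor
  · intro hi
    refine ⟨sub_eq_zero.mp (eq_zero_of_forall_isMaximal_mem hss fun L _ => ?_),
      fun v => sub_eq_zero.mp (eq_zero_of_forall_isMaximal_mem hss fun L _ => ?_)⟩
    · exact (mul_self_sub_mem_and_commutator_mem hi L).1
    · exact (mul_self_sub_mem_and_commutator_mem hi L).2 v
  · rintro ⟨hidem, hcomm⟩
    exact spectrum_mul_subset_union_zero_iff.mpr fun u hu =>
      isUnit_one_sub_add_mul hidem hu (hcomm u)

/-- Theorem 2.2: In a semisimple complex unital Banach algebra, an element `e`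
satisfies `σ(e x) ⊆ σ(x) ∪ {0}` for all `x` iff `e` is a central idempotent. -/
theorem spectral_characterization_central_idempotent
    {A : Type*} [NormedRing A] [NormedAlgebra ℂ A] [CompleteSpace A] [NormOneClass A]
    (hss : ∀ a : A, (∀ x : A, spectrum ℂ (a * x) = {0}) → a = 0)
    (e : A) :
    (∀ x : A, spectrum ℂ (e * x) ⊆ spectrum ℂ x ∪ {0}) ↔
      (e * e = e ∧ ∀ x : A, e * x = x * e) :=
  spectral_characterization_central_idempotent_general hss e
end

section
/- Let A be a semisimple complex unital Banach algebra. If e ∈ A satisfies σ(e·x) ∪ {0} = σ(x) ∪ {0} for all x ∈ A, then e = 1. -/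
private theorem swap_unit' {A : Type*} [Ring A]
    (x y : A) (hxy : IsUnit (1 - x*y)) : IsUnit (1 - y*x) := by
  set c : A := ↑hxy.unit⁻¹ with hc
  have hc1 : (1 - x*y) * c = 1 := hxy.mul_val_inv
  have hc2 : c * (1 - x*y) = 1 := hxy.val_inv_mul
  rw [sub_mul, one_mul] at hc1
  rw [mul_sub, mul_one] at hc2
  have key1 : x * y * c = c - 1 := by
    apply eq_sub_of_add_eq; rw [← hc1]; abel
  have key2 : c * (x * y) = c - 1 := by
    apply eq_sub_of_add_eq; rw [← hc2]; abel
  refine ⟨⟨1 - y*x, 1 + y * c * x, ?_, ?_⟩, rfl⟩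
  · have expand : (1 - y*x) * (1 + y * c * x) =
        1 + y*c*x - y*x - y*(x*y*c)*x := by noncomm_ring
    rw [expand, key1]; noncomm_ring
  · have expand : (1 + y * c * x) * (1 - y*x) =
        1 + y*c*x - y*x - y*(c*(x*y))*x := by noncomm_ring
    rw [expand, key2]; noncomm_ring

/-- Corollary 2.3: In a semisimple complex unital Banach algebra, if
`σ(e x) ∪ {0} = σ(x) ∪ {0}` for all `x`, then `e = 1`. -/
theorem eq_one_of_spectrum_union_zero_eq
    {A : Type*} [NormedRing A] [NormedAlgebra ℂ A] [CompleteSpace A] [NormOneClass A]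
    (hss : ∀ a : A, (∀ x : A, spectrum ℂ (a * x) = {0}) → a = 0)
    (e : A)
    (h : ∀ x : A, spectrum ℂ (e * x) ∪ {0} = spectrum ℂ x ∪ {0}) :
    e = 1 := by
  have h10 : (1 : A) ≠ 0 := by
    intro h'
    have h1 : ‖(1:A)‖ = 1 := norm_one
    rw [h', norm_zero] at h1; norm_num at h1
  haveI : Nontrivial A := ⟨1, 0, h10⟩
  have hsub : ∀ x : A, spectrum ℂ (e * x) ⊆ spectrum ℂ x ∪ {0} := by
    intro x μ hμ
    have : μ ∈ spectrum ℂ (e*x) ∪ {0} := Or.inl hμ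
    rw [h x] at this; exact this
  have hsup : ∀ x : A, spectrum ℂ x ⊆ spectrum ℂ (e * x) ∪ {0} := by
    intro x μ hμ
    have : μ ∈ spectrum ℂ x ∪ {0} := Or.inl hμ
    rw [← h x] at this; exact this
  -- σ(e) ⊆ {1, 0}
  have h1 : spectrum ℂ e ⊆ ({0, 1} : Set ℂ) := by
    have := hsub 1
    rw [mul_one, spectrum.one_eq] at this
    simpa using this
  -- roots of t^2 - t + 1
  set s : ℂ := Complex.I * (Real.sqrt 3 : ℂ) with hs
  have hs2 : s^2 = -3 := by
    rw [hs, mul_pow, Complex.I_sq]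
    have : ((Real.sqrt 3 : ℝ) : ℂ)^2 = ((3:ℝ) : ℂ) := by
      rw [← Complex.ofReal_pow, Real.sq_sqrt (by norm_num)]
    rw [this]; norm_num
  set α : ℂ := (1 + s)/2 with hα
  set β : ℂ := (1 - s)/2 with hβ
  have hsum : α + β = 1 := by rw [hα, hβ]; ring
  have hprod : α * β = 1 := by
    rw [hα, hβ]
    have : (1+s)/2 * ((1-s)/2) = (1 - s^2)/4 := by ring
    rw [this, hs2]; norm_num
  have hα0 : α ≠ 0 := by intro h0; rw [h0, zero_mul] at hprod; norm_num at hprod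
  have hβ0 : β ≠ 0 := by intro h0; rw [h0, mul_zero] at hprod; norm_num at hprod
  have hα1 : α ≠ 1 := by
    intro h0; rw [h0] at hsum hprod
    have : β = 0 := by linear_combination hsum
    rw [this, mul_zero] at hprod; norm_num at hprod
  have hβ1 : β ≠ 1 := by
    intro h0; rw [h0] at hsum hprod
    have : α = 0 := by linear_combination hsum
    rw [this, zero_mul] at hprod; norm_num at hprod
  have hαe : IsUnit (algebraMap ℂ A α - e) := by
    rw [← spectrum.notMem_iff]
    intro hmem
    rcases h1 hmem with h' | h'
    · exact hα0 h'
    · exact hα1 h'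
  have hβe : IsUnit (algebraMap ℂ A β - e) := by
    rw [← spectrum.notMem_iff]
    intro hmem
    rcases h1 hmem with h' | h'
    · exact hβ0 h'
    · exact hβ1 h' 
  -- 1 ∉ σ(e(1-e))
  have hA : (1:ℂ) ∉ spectrum ℂ (e * (1 - e)) := by
    rw [spectrum.notMem_iff]
    have factored : algebraMap ℂ A 1 - e * (1 - e) =
        (algebraMap ℂ A α - e) * (algebraMap ℂ A β - e) := by
      have c1 : algebraMap ℂ A α * algebraMap ℂ A β = algebraMap ℂ A 1 := by
        rw [← map_mul, hprod]
      have c2 : e * algebraMap ℂ A β = algebraMap ℂ A β * e := (Algebra.commutes β e).symm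
      have c3 : algebraMap ℂ A α * e + algebraMap ℂ A β * e = e := by
        rw [← add_mul, ← map_add, hsum, map_one, one_mul]
      calc algebraMap ℂ A 1 - e * (1 - e)
          = algebraMap ℂ A 1 - (algebraMap ℂ A α * e + algebraMap ℂ A β * e) + e * e := by
            rw [c3]; noncomm_ring
        _ = algebraMap ℂ A α * algebraMap ℂ A β - algebraMap ℂ A α * e - e * algebraMap ℂ A β
            + e * e := by rw [c1, c2]; noncomm_ring
        _ = (algebraMap ℂ A α - e) * (algebraMap ℂ A β - e) := by noncomm_ring
    rw [factored]
    exact hαe.mul hβe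
  -- e is a unit
  have he : IsUnit e := by
    have h1e : (1:ℂ) ∉ spectrum ℂ (1 - e) := by
      intro hmem
      rcases hsup (1 - e) hmem with h' | h'
      · rw [mul_sub, mul_one] at h'; exact hA (by rwa [mul_sub, mul_one])
      · norm_num at h'
    rw [spectrum.notMem_iff] at h1e
    rw [map_one] at h1e
    simpa using h1e
  -- the key unit lemmas
  set a : A := e - 1 with ha
  clear_value a
  have hC : ∀ w : A, IsUnit w → ∀ l : ℂ, l ≠ 0 → IsUnit (w - l • a) := by
    intro w hw l hl
    set x : A := ↑he.unit⁻¹ * (w + l • 1) with hx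
    have heinv : e * ↑he.unit⁻¹ = 1 := he.mul_val_inv
    have hex : e * x = w + l • 1 := by
      rw [hx, ← mul_assoc, heinv, one_mul]
    have hnot : l ∉ spectrum ℂ (e * x) := by
      rw [spectrum.notMem_iff, hex]
      have : algebraMap ℂ A l - (w + l • 1) = -w := by
        rw [Algebra.algebraMap_eq_smul_one]; abel
      rw [this]; exact hw.neg
    have hx' : l ∉ spectrum ℂ x := by
      intro hmem
      rcases hsup x hmem with h' | h'
      · exact hnot h'
      · exact hl (by simpa using h')
    rw [spectrum.notMem_iff] at hx'
    have heq : w - l • a = e * (x - l • 1) := by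
      rw [mul_sub, hex, ha, smul_sub, mul_smul_comm, mul_one]
      abel
    rw [heq, show x - l • 1 = -(algebraMap ℂ A l - x) by
      rw [Algebra.algebraMap_eq_smul_one]; abel]
    exact he.mul hx'.neg
  have hD : ∀ v : A, IsUnit v → IsUnit (1 - v * a) := by
    intro v hv
    have hvinv : IsUnit ((↑hv.unit⁻¹ : A) - (1:ℂ) • a) :=
      hC _ hv.unit⁻¹.isUnit 1 one_ne_zero
    rw [one_smul] at hvinv
    have hv1 : v * ↑hv.unit⁻¹ = 1 := hv.mul_val_inv
    have : 1 - v * a = v * ((↑hv.unit⁻¹ : A) - a) := by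
      rw [mul_sub, hv1]
    rw [this]; exact hv.mul hvinv
  have hE : ∀ x : A, IsUnit (1 - x * a) := by
    intro x
    set t : ℂ := ((‖x‖ + 1 : ℝ) : ℂ) with ht
    have htpos : (0:ℝ) < ‖x‖ + 1 := by positivity
    have ht0 : t ≠ 0 := by
      rw [ht]
      exact_mod_cast ne_of_gt htpos
    have htx : IsUnit (algebraMap ℂ A t - x) := by
      rw [← spectrum.notMem_iff]
      intro hmem
      have hle := spectrum.norm_le_norm_of_mem hmem
      rw [ht, Complex.norm_real, Real.norm_of_nonneg htpos.le] at hle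
      linarith
    have hu1 : IsUnit (1 - t • a) := by
      simpa using hC 1 isUnit_one t ht0
    set v : A := ↑hu1.unit⁻¹ * (x - algebraMap ℂ A t) with hv
    have hvunit : IsUnit v := by
      refine hu1.unit⁻¹.isUnit.mul ?_
      rw [show x - algebraMap ℂ A t = -(algebraMap ℂ A t - x) by abel]
      exact htx.neg
    have hfac : (1 - t • a) * (1 - v * a) = 1 - x * a := by
      have hmulv : (1 - t • a) * v = x - algebraMap ℂ A t := by
        rw [hv, ← mul_assoc, hu1.mul_val_inv, one_mul]
      calc (1 - t • a) * (1 - v * a)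
          = (1 - t • a) - ((1 - t • a) * v) * a := by noncomm_ring
        _ = (1 - t • a) - (x - algebraMap ℂ A t) * a := by rw [hmulv]
        _ = 1 - x * a := by
            rw [sub_mul, ← Algebra.smul_def]; abel
    rw [← hfac]
    exact hu1.mul (hD v hvunit)
  -- conclusion
  have hF : ∀ x : A, spectrum ℂ (a * x) = {0} := by
    intro x
    have hsub0 : spectrum ℂ (a * x) ⊆ {0} := by
      intro l hl
      by_contra hl0
      rw [Set.mem_singleton_iff] at hl0
      have hsw : IsUnit (1 - a * (l⁻¹ • x)) := swap_unit' (l⁻¹ • x) a (hE (l⁻¹ • x))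
      have hfac2 : algebraMap ℂ A l - a * x = algebraMap ℂ A l * (1 - a * (l⁻¹ • x)) := by
        rw [mul_sub, mul_one, ← Algebra.smul_def, mul_smul_comm, smul_smul,
          mul_inv_cancel₀ hl0, one_smul]
      rw [spectrum.mem_iff] at hl
      exact hl (hfac2 ▸ ((isUnit_iff_ne_zero.mpr hl0).map (algebraMap ℂ A)).mul hsw)
    rcases Set.subset_singleton_iff_eq.mp hsub0 with h' | h'
    · exact absurd h' (spectrum.nonempty _).ne_empty
    · exact h'
  have hfin := hss a hF
  rw [ha, sub_eq_zero] at hfin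
  exact hfin
end

section
/- Let A be a semisimple complex unital Banach algebra and let a, b ∈ A satisfy σ(a·x) = σ(b·x) for all x ∈ A. If a is a unit-regular element (i.e., a = e·t for some idempotent e ∈ A and some invertible t ∈ A), then a = b. -/
/-!
With `c := b * t⁻¹` we have `σ (e * y) = σ (c * y)` for all `y`, and must show `c = e`.
Semisimplicity first gives `c * (1 - e) = 0` and `(1 - e) * c = 0`. Then `q := e - c` has
`σ q = σ (c * q) = σ (c - c²) = σ (e - e²) = {0}`, so `u := 1 - q` is a unit, equal to `1` off
the corner `e A e`, with `1 - u * w` invertible iff `1 - w` is, whenever `e * w = w`.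
For `p := 1 - u⁻¹` the identity `u * (1 - (w + p)) = 1 - u * w` makes invertibility of `1 - w`
invariant under adding multiples of `p`. Starting from `1 - (x - n • e)`, invertible for large
`n`, this shows that every `1 - p * x` is invertible, so `p` lies in the radical and vanishes.
-/

section QuasiRegular

variable {R : Type*} [Ring R] {e : R}

theorem isUnit_one_sub_one_sub_mul {v : R}
    (hv : ∀ y, e * y = y → IsUnit (1 - y) → IsUnit (1 - v * y))
    {w : R} (hw : e * w = w) (hw₁ : IsUnit (1 - w)) : IsUnit (1 - (1 - v) * w) := by
  obtain ⟨s, hs⟩ := hw₁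
  have hy : e * -(w * ↑s⁻¹) = -(w * ↑s⁻¹) := by rw [mul_neg, ← mul_assoc, hw]
  have hy₁ : 1 - -(w * ↑s⁻¹) = ↑s⁻¹ := by
    calc 1 - -(w * ↑s⁻¹) = (↑s + w) * ↑s⁻¹ := by rw [add_mul, Units.mul_inv]; abel
      _ = ↑s⁻¹ := by rw [hs, sub_add_cancel, one_mul]
  have key : (1 - v * -(w * ↑s⁻¹)) * ↑s = 1 - (1 - v) * w := by
    rw [sub_mul, one_mul, mul_neg, neg_mul, mul_assoc, mul_assoc, Units.inv_mul, mul_one, hs]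
    noncomm_ring
  rw [← key]
  exact (hv _ hy (by rw [hy₁]; exact s⁻¹.isUnit)).mul s.isUnit

variable {u : Rˣ}

theorem isUnit_one_sub_add_one_sub_inv_iff
    (hu : ∀ w, e * w = w → (IsUnit (1 - ↑u * w) ↔ IsUnit (1 - w))) {w : R}
    (hw : e * w = w) :
    IsUnit (1 - (w + (1 - ↑u⁻¹))) ↔ IsUnit (1 - w) := by
  have key : ↑u * (1 - (w + (1 - ↑u⁻¹))) = 1 - ↑u * w := by
    rw [mul_sub, mul_add, mul_sub, Units.mul_inv]; noncomm_ring
  rw [← hu w hw, ← key, Units.isUnit_units_mul]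

theorem isUnit_one_sub_add_nsmul_iff
    (hu : ∀ w, e * w = w → (IsUnit (1 - ↑u * w) ↔ IsUnit (1 - w)))
    (hp : e * (1 - ↑u⁻¹) = 1 - ↑u⁻¹) (n : ℕ) {w : R}
    (hw : e * w = w) : IsUnit (1 - (w + n • (1 - ↑u⁻¹))) ↔ IsUnit (1 - w) := by
  induction n generalizing w with
  | zero => rw [zero_smul, add_zero]
  | succ n ih =>
    have hw' : e * (w + (1 - ↑u⁻¹)) = w + (1 - ↑u⁻¹) := by rw [mul_add, hw, hp]
    rw [← isUnit_one_sub_add_one_sub_inv_iff hu hw, ← ih hw', succ_nsmul, add_assoc,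
      add_comm (n • _)]

theorem one_sub_inv_mem_corner (hl : e * (1 - ↑u) = 1 - ↑u) (hr : (1 - ↑u) * e = 1 - ↑u) :
    e * (1 - ↑u⁻¹) = 1 - ↑u⁻¹ ∧ (1 - ↑u⁻¹) * e = 1 - ↑u⁻¹ := by
  have h₁ : 1 - (↑u⁻¹ : R) = -((1 - ↑u) * ↑u⁻¹) := by
    rw [sub_mul, one_mul, Units.mul_inv]; abel
  have h₂ : 1 - (↑u⁻¹ : R) = -(↑u⁻¹ * (1 - ↑u)) := by
    rw [mul_sub, mul_one, Units.inv_mul]; abel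
  constructor
  · rw [h₁, mul_neg, ← mul_assoc, hl]
  · rw [h₂, neg_mul, mul_assoc, hr]

theorem isUnit_one_sub_one_sub_inv_mul (he : IsIdempotentElem e)
    (hu : ∀ w, e * w = w → (IsUnit (1 - ↑u * w) ↔ IsUnit (1 - w)))
    (hl : e * (1 - ↑u) = 1 - ↑u) (hr : (1 - ↑u) * e = 1 - ↑u)
    (hshift : ∀ x, e * x = x → ∃ n : ℕ, IsUnit (1 - (x - n • e))) (x : R) :
    IsUnit (1 - (1 - ↑u⁻¹) * x) := by
  obtain ⟨hpl, hpr⟩ := one_sub_inv_mem_corner hl hr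
  have hinv : ∀ y, e * y = y → IsUnit (1 - y) → IsUnit (1 - ↑u⁻¹ * y) := by
    intro y hy hy₁
    have hcorner : e * (↑u⁻¹ * y) = ↑u⁻¹ * y := by
      rw [← sub_sub_cancel 1 (↑u⁻¹ : R), sub_mul, one_mul, mul_sub, hy, ← mul_assoc, hpl]
    rwa [← hu _ hcorner, Units.mul_inv_cancel_left]
  have hex : e * (e * x) = e * x := by rw [← mul_assoc, he.eq]
  obtain ⟨n, hn⟩ := hshift (e * x) hex
  have hshifted := isUnit_one_sub_one_sub_mul hinv (by rw [mul_sub, hex, mul_smul_comm, he.eq]) hn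
  have hw : e * ((1 - ↑u⁻¹) * (e * x) - n • (1 - ↑u⁻¹)) =
      (1 - ↑u⁻¹) * (e * x) - n • (1 - ↑u⁻¹) := by
    rw [mul_sub, ← mul_assoc, hpl, mul_smul_comm, hpl]
  rw [mul_sub, mul_smul_comm, hpr, ← isUnit_one_sub_add_nsmul_iff hu hpl n hw, sub_add_cancel,
    ← mul_assoc, hpr] at hshifted
  exact hshifted

end QuasiRegular

theorem isUnit_one_sub_iff_of_spectrum_eq {R A : Type*} [CommSemiring R] [Ring A] [Algebra R A]
    {x y : A} (h : spectrum R x = spectrum R y) : IsUnit (1 - x) ↔ IsUnit (1 - y) := by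
  rw [← map_one (algebraMap R A), ← spectrum.notMem_iff, ← spectrum.notMem_iff, h]

theorem IsIdempotentElem.isUnit_one_add_nsmul {A : Type*} [Ring A] [Algebra ℂ A] {e : A}
    (he : IsIdempotentElem e) (n : ℕ) : IsUnit (1 + n • e) := by
  have hn : (n : ℂ) + 1 ≠ 0 := Nat.cast_add_one_ne_zero n
  refine ⟨⟨1 + n • e, 1 - ((n : ℂ) / (n + 1)) • e, ?_, ?_⟩, rfl⟩ <;>
  · rw [← Nat.cast_smul_eq_nsmul ℂ]
    simp only [add_mul, mul_add, mul_sub, sub_mul, smul_mul_assoc, mul_smul_comm, one_mul,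
      mul_one, he.eq]
    match_scalars <;> grind

section Banach

variable {A : Type*} [NormedRing A] [NormedAlgebra ℂ A] [CompleteSpace A]

theorem exists_isUnit_one_sub_sub_nsmul {e x : A} (he : IsIdempotentElem e) (hx : e * x = x) :
    ∃ n : ℕ, IsUnit (1 - (x - n • e)) := by
  obtain ⟨n, hn⟩ := exists_nat_gt ‖x‖
  have hn₀ : (n : ℂ) + 1 ≠ 0 := Nat.cast_add_one_ne_zero n
  have hsmall : ‖((n : ℂ) + 1)⁻¹ • x‖ < 1 := by
    have hnorm : ‖(n : ℂ) + 1‖ = n + 1 := by exact_mod_cast Complex.norm_natCast (n + 1)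
    rw [norm_smul, norm_inv, hnorm, inv_mul_lt_one₀ (by positivity)]
    linarith
  refine ⟨n, ?_⟩
  have key : (1 + n • e) * (1 - ((n : ℂ) + 1)⁻¹ • x) = 1 - (x - n • e) := by
    rw [← Nat.cast_smul_eq_nsmul ℂ]
    simp only [add_mul, mul_sub, one_mul, mul_one, smul_mul_assoc, mul_smul_comm, hx]
    match_scalars <;> grind
  rw [← key]
  exact (he.isUnit_one_add_nsmul n).mul (isUnit_one_sub_of_norm_lt_one hsmall)

theorem spectrum_mul_eq_zero_of_forall_isUnit [Nontrivial A] {p : A}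
    (h : ∀ x, IsUnit (1 - p * x)) (x : A) : spectrum ℂ (p * x) = {0} := by
  refine (spectrum.nonempty _).subset_singleton_iff.mp fun μ hμ => ?_
  by_contra hμ₀
  rw [Set.mem_singleton_iff] at hμ₀
  refine spectrum.notMem_iff.mpr ?_ hμ
  have key : algebraMap ℂ A μ - p * x = algebraMap ℂ A μ * (1 - p * (μ⁻¹ • x)) := by
    rw [mul_sub, mul_one, ← Algebra.smul_def, mul_smul_comm, smul_smul, mul_inv_cancel₀ hμ₀,
      one_smul]
  rw [key]
  exact ((Ne.isUnit hμ₀).map _).mul (h _)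

open Polynomial in
theorem spectrum_sub_mul_self_eq [Nontrivial A] {x y : A} (h : spectrum ℂ x = spectrum ℂ y) :
    spectrum ℂ (x - x * x) = spectrum ℂ (y - y * y) := by
  have key (z : A) : spectrum ℂ (z - z * z) = (fun k => k - k * k) '' spectrum ℂ z := by
    have := spectrum.map_polynomial_aeval_of_nonempty z (X - X * X) (spectrum.nonempty z)
    simp only [map_sub, map_mul, aeval_X, eval_sub, eval_mul, eval_X] at this
    exact this
  rw [key, key, h]

theorem eq_of_forall_spectrum_mul_eq_of_isIdempotentElem
    (hss : ∀ a : A, (∀ x : A, spectrum ℂ (a * x) = {0}) → a = 0)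
    {e c : A} (he : IsIdempotentElem e) (h : ∀ y, spectrum ℂ (e * y) = spectrum ℂ (c * y)) :
    c = e := by
  nontriviality A
  have hc_right : c * (1 - e) = 0 := hss _ fun z => by
    rw [mul_assoc, ← h, ← mul_assoc, he.mul_one_sub_self, zero_mul, spectrum.zero_eq]
  have hc_left : (1 - e) * c = 0 := hss _ fun z => by
    refine (spectrum.nonempty _).subset_singleton_iff.mp (Set.sdiff_eq_empty.mp ?_)
    rw [mul_assoc, spectrum.nonzero_mul_comm, mul_assoc, ← h, spectrum.nonzero_mul_comm,
      mul_assoc, he.one_sub_mul_self, mul_zero, spectrum.zero_eq, Set.sdiff_self]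
  have hec : e * c = c := by rwa [sub_mul, one_mul, sub_eq_zero, eq_comm] at hc_left
  have hce : c * e = c := by rwa [mul_sub, mul_one, sub_eq_zero, eq_comm] at hc_right
  set q := e - c with hq
  have hq_spectrum : spectrum ℂ q = {0} := by
    have hcq : c * q = c - c * c := by rw [hq, mul_sub, hce]
    have heq : e * q = q := by rw [hq, mul_sub, he.eq, hec]
    rw [← heq, h, hcq, spectrum_sub_mul_self_eq (by simpa using (h 1).symm), he.eq, sub_self,
      spectrum.zero_eq]
  obtain ⟨u, hu⟩ : IsUnit (1 - q) := by
    rw [← map_one (algebraMap ℂ A), ← spectrum.notMem_iff, hq_spectrum]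
    exact one_ne_zero
  have hu_corner : ∀ w, e * w = w → (IsUnit (1 - ↑u * w) ↔ IsUnit (1 - w)) := fun w hw => by
    have huw : ↑u * w = c * w := by rw [hu, hq, sub_mul, sub_mul, hw, one_mul]; abel
    rw [huw, isUnit_one_sub_iff_of_spectrum_eq (h w).symm, hw]
  have hl : e * (1 - ↑u) = 1 - ↑u := by rw [hu, hq, sub_sub_cancel, mul_sub, he.eq, hec]
  have hr : (1 - ↑u) * e = 1 - ↑u := by rw [hu, hq, sub_sub_cancel, sub_mul, he.eq, hce]
  have hp : 1 - (↑u⁻¹ : A) = 0 := hss _ <| spectrum_mul_eq_zero_of_forall_isUnit <|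
    isUnit_one_sub_one_sub_inv_mul he hu_corner hl hr fun _ ↦ exists_isUnit_one_sub_sub_nsmul he
  rw [sub_eq_zero, eq_comm, Units.val_eq_one, inv_eq_one, ← Units.val_eq_one, hu,
    sub_eq_self, hq, sub_eq_zero] at hp
  exact hp.symm

end Banach

theorem eq_of_spectrum_mul_eq_of_unitRegular_general
    {A : Type*} [NormedRing A] [NormedAlgebra ℂ A] [CompleteSpace A]
    (hss : ∀ a : A, (∀ x : A, spectrum ℂ (a * x) = {0}) → a = 0)
    (a b : A)
    (h : ∀ x : A, spectrum ℂ (a * x) = spectrum ℂ (b * x))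
    (hur : ∃ e t : A, e * e = e ∧ IsUnit t ∧ a = e * t) :
    a = b := by
  obtain ⟨e, _, he, ⟨t, rfl⟩, rfl⟩ := hur
  have hc : b * ↑t⁻¹ = e := eq_of_forall_spectrum_mul_eq_of_isIdempotentElem hss he fun y => by
    simpa only [mul_assoc, Units.mul_inv_cancel_left] using h (↑t⁻¹ * y)
  rw [← hc, Units.inv_mul_cancel_right]

/-- Theorem 2.4: In a semisimple complex unital Banach algebra, if
`σ(a x) = σ(b x)` for all `x` and `a` is unit-regular (a product of an
idempotent and an invertible element), then `a = b`. -/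
theorem eq_of_spectrum_mul_eq_of_unitRegular
    {A : Type*} [NormedRing A] [NormedAlgebra ℂ A] [CompleteSpace A] [NormOneClass A]
    (hss : ∀ a : A, (∀ x : A, spectrum ℂ (a * x) = {0}) → a = 0)
    (a b : A)
    (h : ∀ x : A, spectrum ℂ (a * x) = spectrum ℂ (b * x))
    (hur : ∃ e t : A, e * e = e ∧ IsUnit t ∧ a = e * t) :
    a = b :=
  eq_of_spectrum_mul_eq_of_unitRegular_general hss a b h hur
end

section
/- Let A be a commutative semisimple complex unital Banach algebra. If a, b ∈ A satisfy σ(a·x) = σ(b·x) for all x ∈ A, then a = b. -/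
/-!
If a character `φ` separated `a` from `b` with `φ a ≠ 0`, one can choose `β ∈ ℂ` and
`x = -β (e^{βb} - 1)/b` (a genuine element of `A`, given by a power series) with `φ (a x) = 1`.
Then `1 ∈ σ(a x) = σ(b x)`, impossible since `1 - b x = e^{βb}` is invertible. So all characters
agree on `a` and `b`; by Gelfand theory every `(a - b) x` then has spectrum `{0}`, and
semisimplicity gives `a = b`.
-/

open NormedSpace WeakDual

section Exprel

variable (𝕂 : Type*) {𝔸 : Type*} [RCLike 𝕂] [NormedRing 𝔸] [NormedAlgebra 𝕂 𝔸]

/-- The entire function `(exp y - 1) / y`, written as a power series so that it makes sense in any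
Banach algebra. -/
noncomputable def exprel (y : 𝔸) : 𝔸 :=
  ∑' n : ℕ, ((n + 1).factorial⁻¹ : 𝕂) • y ^ n

theorem exprel_summable [CompleteSpace 𝔸] (y : 𝔸) :
    Summable fun n : ℕ => ((n + 1).factorial⁻¹ : 𝕂) • y ^ n := by
  refine .of_norm_bounded (norm_expSeries_summable' (𝕂 := 𝕂) y) fun n => ?_
  have hcoeff : ((n + 1).factorial⁻¹ : 𝕂) = ((n + 1 : ℕ) : 𝕂)⁻¹ * (n.factorial⁻¹ : 𝕂) := by
    rw [Nat.factorial_succ, Nat.cast_mul, mul_inv]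
  rw [hcoeff, mul_smul, norm_smul]
  refine mul_le_of_le_one_left (norm_nonneg _) ?_
  rw [norm_inv, RCLike.norm_natCast]
  exact inv_le_one_of_one_le₀ (by exact_mod_cast Nat.succ_pos n)

theorem exprel_hasSum [CompleteSpace 𝔸] (y : 𝔸) :
    HasSum (fun n : ℕ => ((n + 1).factorial⁻¹ : 𝕂) • y ^ n) (exprel 𝕂 y) :=
  (exprel_summable 𝕂 y).hasSum

theorem mul_exprel [CompleteSpace 𝔸] (y : 𝔸) : y * exprel 𝕂 y = exp y - 1 := by
  have hshift := (hasSum_nat_add_iff' 1).mpr (exp_series_hasSum_exp' (𝕂 := 𝕂) y)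
  simp only [Finset.range_one, Finset.sum_singleton, Nat.factorial_zero, Nat.cast_one, inv_one,
    pow_zero, one_smul] at hshift
  refine ((exprel_hasSum 𝕂 y).mul_left y).unique ?_
  simpa only [mul_smul_comm, ← pow_succ'] using hshift

@[simp]
theorem exprel_zero : exprel 𝕂 (0 : 𝔸) = 1 := by
  rw [exprel, tsum_eq_single 0 fun n hn => by rw [zero_pow hn, smul_zero]]
  simp

theorem map_exprel {𝔹 : Type*} [CompleteSpace 𝔸] [NormedRing 𝔹] [NormedAlgebra 𝕂 𝔹]
    {F : Type*} [FunLike F 𝔸 𝔹] [AlgHomClass F 𝕂 𝔸 𝔹] (f : F) (hf : Continuous f) (y : 𝔸) :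
    f (exprel 𝕂 y) = exprel 𝕂 (f y) := by
  have hmap := (exprel_hasSum 𝕂 y).map f hf
  simp only [Function.comp_def, map_smul, map_pow] at hmap
  exact hmap.tsum_eq.symm

end Exprel

theorem Complex.exists_mul_mul_exprel_eq_neg_one {μ l : ℂ} (hμ : μ ≠ 0) (hμl : μ ≠ l) :
    ∃ β : ℂ, μ * (β * exprel ℂ (β * l)) = -1 := by
  rcases eq_or_ne l 0 with rfl | hl
  · exact ⟨-μ⁻¹, by simp [hμ]⟩
  refine ⟨Complex.log (1 - l / μ) / l, ?_⟩
  set β := Complex.log (1 - l / μ) / l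
  have hexp : NormedSpace.exp (β * l) = 1 - l / μ := by
    rw [← Complex.exp_eq_exp_ℂ, div_mul_cancel₀ _ hl, Complex.exp_log]
    rwa [sub_ne_zero, ne_comm, ne_eq, div_eq_one_iff_eq hμ, eq_comm]
  have hmul : β * l * exprel ℂ (β * l) = -(l / μ) := by rw [mul_exprel, hexp]; ring
  calc μ * (β * exprel ℂ (β * l)) = μ * (β * l * exprel ℂ (β * l)) / l := by field_simp
    _ = -1 := by rw [hmul]; field_simp

theorem WeakDual.CharacterSpace.apply_eq_apply_of_spectrum_mul_subset {A : Type*} [NormedRing A]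
    [NormedAlgebra ℂ A] [CompleteSpace A] {a b : A}
    (h : ∀ x : A, spectrum ℂ (a * x) ⊆ spectrum ℂ (b * x)) (φ : characterSpace ℂ A)
    (ha : φ a ≠ 0) : φ a = φ b := by
  by_contra hab
  obtain ⟨β, hβ⟩ := Complex.exists_mul_mul_exprel_eq_neg_one ha hab
  set x := -(β • exprel ℂ (β • b))
  have hax : φ (a * x) = 1 := by
    rw [map_mul, map_neg, map_smul, map_exprel ℂ φ (map_continuous φ), map_smul, smul_eq_mul,
      smul_eq_mul, mul_neg, hβ, neg_neg]
  have hbx : b * x = 1 - exp (β • b) := by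
    rw [mul_neg, mul_smul_comm, ← smul_mul_assoc, mul_exprel, neg_sub]
  have hmem : (1 : ℂ) ∈ spectrum ℂ (b * x) :=
    h x (hax ▸ CharacterSpace.apply_mem_spectrum φ (a * x))
  rw [hbx, spectrum.mem_iff, map_one, sub_sub_cancel] at hmem
  exact hmem <| isUnit_exp_of_mem_ball (𝕂 := ℂ) <|
    (expSeries_radius_eq_top ℂ A).symm ▸ edist_lt_top _ _

theorem spectrum_eq_singleton_zero_of_forall_character_eq_zero {A : Type*} [NormedCommRing A]
    [NormedAlgebra ℂ A] [CompleteSpace A] [Nontrivial A] {c : A}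
    (hc : ∀ φ : characterSpace ℂ A, φ c = 0) : spectrum ℂ c = {0} := by
  refine (spectrum.nonempty c).subset_singleton_iff.mp fun z hz => ?_
  obtain ⟨φ, rfl⟩ := CharacterSpace.mem_spectrum_iff_exists.mp hz
  exact hc φ

theorem eq_of_spectrum_mul_eq_comm_general
    {A : Type*} [NormedCommRing A] [NormedAlgebra ℂ A] [CompleteSpace A]
    (hss : ∀ a : A, (∀ x : A, spectrum ℂ (a * x) = {0}) → a = 0)
    (a b : A)
    (h : ∀ x : A, spectrum ℂ (a * x) = spectrum ℂ (b * x)) :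
    a = b := by
  have hchar (φ : characterSpace ℂ A) : φ a = φ b := by
    rcases eq_or_ne (φ a) 0 with ha | ha
    · rcases eq_or_ne (φ b) 0 with hb | hb
      · rw [ha, hb]
      · exact (CharacterSpace.apply_eq_apply_of_spectrum_mul_subset
          (fun x => (h x).superset) φ hb).symm
    · exact CharacterSpace.apply_eq_apply_of_spectrum_mul_subset (fun x => (h x).subset) φ ha
  nontriviality A
  refine sub_eq_zero.mp (hss _ fun x => ?_)
  refine spectrum_eq_singleton_zero_of_forall_character_eq_zero fun φ => ?_
  rw [map_mul, map_sub, hchar φ, sub_self, zero_mul]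

/-- Theorem 2.5: In a commutative semisimple complex unital Banach algebra,
`σ(a x) = σ(b x)` for all `x` implies `a = b`. -/
theorem eq_of_spectrum_mul_eq_comm
    {A : Type*} [NormedCommRing A] [NormedAlgebra ℂ A] [CompleteSpace A] [NormOneClass A]
    (hss : ∀ a : A, (∀ x : A, spectrum ℂ (a * x) = {0}) → a = 0)
    (a b : A)
    (h : ∀ x : A, spectrum ℂ (a * x) = spectrum ℂ (b * x)) :
    a = b :=
  eq_of_spectrum_mul_eq_comm_general hss a b h
end

section
/- Let A be a unital C*-algebra. If a, b ∈ A satisfy σ(a·x) = σ(b·x) for all x ∈ A, then a = b. -/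
/-!
Put `d = a - b`. Testing the hypothesis at `x = y (μ - a y)⁻¹` shows that every nonzero
`μ ∈ σ(d y)` lies in `σ(a y) = σ(b y)`; exchanging `a` and `b`, also `-μ ∈ σ(b y)`.
For `y = b⋆` the spectrum of `b b⋆` is nonnegative, so `σ(d b⋆) ⊆ {0}`; taking adjoints,
`σ(b d⋆) ⊆ {0}`, and then `y = d⋆` gives `σ(d d⋆) ⊆ {0}`. A selfadjoint element with spectrum
`{0}` vanishes, so `d d⋆ = 0` and `d = 0` by the C⋆-identity.
-/

open scoped ComplexOrder

section SpectrumMul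

variable {𝕜 A : Type*} [Field 𝕜] [Ring A] [Algebra 𝕜 A] {a b : A}

lemma spectrum_sub_mul_subset_insert_zero
    (h : ∀ x, spectrum 𝕜 (a * x) = spectrum 𝕜 (b * x)) (y : A) :
    spectrum 𝕜 ((a - b) * y) ⊆ insert 0 (spectrum 𝕜 (a * y)) := by
  intro μ hμ
  by_contra hμ'
  obtain ⟨hμ0, hμy⟩ := not_or.mp hμ'
  obtain ⟨u, hu⟩ := spectrum.notMem_iff.mp hμy
  have hx (c : A) : algebraMap 𝕜 A (-1) - c * (y * ↑u⁻¹) = -((u + c * y) * ↑u⁻¹) := by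
    rw [map_neg, map_one, add_mul, u.mul_inv, ← mul_assoc]; abel
  have hb : IsUnit ((u + b * y) * ↑u⁻¹) := by
    rw [← IsUnit.neg_iff, ← hx, ← spectrum.notMem_iff, ← h, spectrum.notMem_iff, hx,
      IsUnit.neg_iff, hu, sub_add_cancel]
    exact ((Ne.isUnit hμ0).map _).mul u⁻¹.isUnit
  rw [Units.isUnit_mul_units, hu] at hb
  refine spectrum.mem_iff.mp hμ ?_
  convert hb using 1
  noncomm_ring

lemma spectrum_sub_mul_subset_insert_zero_inter_neg
    (h : ∀ x, spectrum 𝕜 (a * x) = spectrum 𝕜 (b * x)) (y : A) :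
    spectrum 𝕜 ((a - b) * y) ⊆ insert 0 (spectrum 𝕜 (b * y) ∩ -spectrum 𝕜 (b * y)) := by
  intro μ hμ
  rcases eq_or_ne μ 0 with rfl | hμ0
  · exact Set.mem_insert _ _
  have hμa := (spectrum_sub_mul_subset_insert_zero h y hμ).resolve_left hμ0
  have hμ' : -μ ∈ spectrum 𝕜 ((b - a) * y) := by
    rwa [← neg_sub, neg_mul, ← spectrum.neg_eq, Set.neg_mem_neg]
  have hμb := (spectrum_sub_mul_subset_insert_zero (fun x ↦ (h x).symm) y hμ').resolve_left
    (neg_ne_zero.mpr hμ0)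
  exact Or.inr ⟨h y ▸ hμa, Set.mem_neg.mpr hμb⟩

lemma spectrum_sub_mul_subset_zero
    (h : ∀ x, spectrum 𝕜 (a * x) = spectrum 𝕜 (b * x)) {y : A}
    (hy : spectrum 𝕜 (b * y) ∩ -spectrum 𝕜 (b * y) ⊆ {0}) :
    spectrum 𝕜 ((a - b) * y) ⊆ {0} :=
  (spectrum_sub_mul_subset_insert_zero_inter_neg h y).trans
    (Set.insert_subset_iff.mpr ⟨rfl, hy⟩)

end SpectrumMul

lemma spectrum_mul_star_self_inter_neg_subset_zero {A : Type*} [CStarAlgebra A] [PartialOrder A]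
    [StarOrderedRing A] (b : A) :
    spectrum ℂ (b * star b) ∩ -spectrum ℂ (b * star b) ⊆ {0} := by
  rintro μ ⟨hμ, hμ'⟩
  have hnonneg := spectrum_nonneg_of_nonneg (𝕜 := ℂ) (mul_star_self_nonneg b)
  exact le_antisymm (neg_nonneg.mp (hnonneg hμ')) (hnonneg hμ)

lemma spectrum_star_subset_zero {R A : Type*} [CommSemiring R] [StarRing R] [Ring A]
    [Algebra R A] [StarRing A] [StarModule R A] {x : A} (hx : spectrum R x ⊆ {0}) :
    spectrum R (star x) ⊆ {0} := by
  rw [spectrum.map_star]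
  intro μ hμ
  simpa using hx hμ

/-- Theorem 2.6: In a unital C*-algebra, `σ(a x) = σ(b x)` for all `x`
implies `a = b`. -/
theorem eq_of_spectrum_mul_eq_cstar
    {A : Type*} [NormedRing A] [StarRing A] [CStarRing A] [CompleteSpace A]
    [NormedAlgebra ℂ A] [StarModule ℂ A]
    (a b : A)
    (h : ∀ x : A, spectrum ℂ (a * x) = spectrum ℂ (b * x)) :
    a = b := by
  let _ : CStarAlgebra A := { }
  let _ := CStarAlgebra.spectralOrder A
  have _ := CStarAlgebra.spectralOrderedRing A
  have hb : spectrum ℂ ((a - b) * star b) ⊆ {0} :=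
    spectrum_sub_mul_subset_zero h (spectrum_mul_star_self_inter_neg_subset_zero b)
  have hb' : spectrum ℂ (b * star (a - b)) ⊆ {0} := by
    simpa only [star_mul, star_star] using spectrum_star_subset_zero hb
  have hd : spectrum ℂ ((a - b) * star (a - b)) ⊆ {0} :=
    spectrum_sub_mul_subset_zero h (Set.inter_subset_left.trans hb')
  have hd0 : (a - b) * star (a - b) = 0 :=
    CFC.eq_zero_of_spectrum_subset_zero _ hd (IsSelfAdjoint.mul_star_self _).isStarNormal
  exact sub_eq_zero.mp ((CStarRing.mul_star_self_eq_zero_iff _).mp hd0)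
end

section
/- Let A be a unital C*-algebra and let a, b ∈ A satisfy σ(a·x) = σ(b·x) for all x ∈ A. If a is self-adjoint (a = a*), then b is self-adjoint (b = b*). -/
/-! Since `σ(b) = σ(a) ⊆ ℝ`, and membership of `1` in a spectrum is unchanged by cyclic
permutation of a product and by taking adjoints, `1 ∈ σ(b y) ↔ 1 ∈ σ(b* y)` for every `y`.
Testing this against `y = -(z - b)⁻¹` shows that every nonzero `z ∈ σ(b - b*)` lies in `σ(b)`,
so `σ(b - b*)` is real. A skew-adjoint element is normal, and a normal element with real
spectrum is self-adjoint; being both, `b - b*` vanishes. -/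

namespace spectrum

section Field

variable {𝕜 A : Type*} [Field 𝕜] [Ring A] [Algebra 𝕜 A]

lemma sub_subset_insert_zero_of_one_mem_mul {b c : A}
    (hbc : ∀ y : A, (1 : 𝕜) ∈ spectrum 𝕜 (c * y) → (1 : 𝕜) ∈ spectrum 𝕜 (b * y)) :
    spectrum 𝕜 (b - c) ⊆ insert 0 (spectrum 𝕜 b) := by
  intro z hz
  by_contra! hzb
  rw [Set.mem_insert_iff, not_or] at hzb
  obtain ⟨hz0, hzb⟩ := hzb
  obtain ⟨u, hu⟩ := notMem_iff.mp hzb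
  -- with `y = -(z - b)⁻¹`, one has `1 - x y = (z - b + x) (z - b)⁻¹` for every `x`
  have factor : ∀ x : A, algebraMap 𝕜 A 1 - x * -↑u⁻¹ = (algebraMap 𝕜 A z - b + x) * ↑u⁻¹ := by
    intro x
    rw [map_one, add_mul, mul_neg, sub_neg_eq_add, ← hu, u.mul_inv]
  have hb : (1 : 𝕜) ∉ spectrum 𝕜 (b * -↑u⁻¹) := by
    rw [notMem_iff, factor, sub_add_cancel]
    exact ((IsUnit.mk0 z hz0).map (algebraMap 𝕜 A)).mul u⁻¹.isUnit
  have hc : IsUnit ((algebraMap 𝕜 A z - b + c) * ↑u⁻¹) := by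
    rw [← factor, ← notMem_iff]
    exact fun h ↦ hb (hbc _ h)
  apply mem_iff.mp hz
  rw [sub_sub_eq_add_sub, add_sub_right_comm]
  simpa using hc.mul u.isUnit

end Field

variable {A : Type*} [Ring A] [StarRing A] [Algebra ℂ A] [StarModule ℂ A]

lemma one_mem_star_iff (u : A) : (1 : ℂ) ∈ spectrum ℂ (star u) ↔ (1 : ℂ) ∈ spectrum ℂ u := by
  rw [spectrum.map_star, Set.mem_star, star_one]

lemma one_mem_star_mul_iff_of_spectrum_mul_eq {a b : A}
    (h : ∀ x : A, spectrum ℂ (a * x) = spectrum ℂ (b * x)) (ha : IsSelfAdjoint a) (y : A) :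
    (1 : ℂ) ∈ spectrum ℂ (star b * y) ↔ (1 : ℂ) ∈ spectrum ℂ (b * y) :=
  have mul_swap (u v : A) : (1 : ℂ) ∈ spectrum ℂ (u * v) ↔ (1 : ℂ) ∈ spectrum ℂ (v * u) := by
    simpa using unit_mem_mul_comm (R := ℂ) (r := 1)
  calc (1 : ℂ) ∈ spectrum ℂ (star b * y)
      ↔ (1 : ℂ) ∈ spectrum ℂ (y * star b) := mul_swap _ _
    _ ↔ (1 : ℂ) ∈ spectrum ℂ (b * star y) := by rw [← one_mem_star_iff, star_mul, star_star]
    _ ↔ (1 : ℂ) ∈ spectrum ℂ (a * star y) := by rw [h]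
    _ ↔ (1 : ℂ) ∈ spectrum ℂ (y * a) := by rw [← one_mem_star_iff, star_mul, star_star, ha.star_eq]
    _ ↔ (1 : ℂ) ∈ spectrum ℂ (a * y) := mul_swap _ _
    _ ↔ (1 : ℂ) ∈ spectrum ℂ (b * y) := by rw [h]

end spectrum

lemma eq_zero_of_mem_skewAdjoint_of_spectrum_subset_range_ofReal {A : Type*} [CStarAlgebra A]
    {c : A} (hc : c ∈ skewAdjoint A) (hσ : spectrum ℂ c ⊆ Set.range Complex.ofReal) : c = 0 := by
  have : IsStarNormal c := skewAdjoint.isStarNormal_of_mem hc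
  have hsa : IsSelfAdjoint c :=
    QuasispectrumRestricts.isSelfAdjoint c
      (SpectrumRestricts.of_subset_range_algebraMap Complex.ofReal_re hσ)
  have hneg : c = -c := hsa.star_eq.symm.trans (skewAdjoint.mem_iff.mp hc)
  have htwo : (2 : ℂ) • c = 0 := by
    rw [two_smul]
    nth_rw 1 [hneg]
    exact neg_add_cancel c
  exact (smul_eq_zero.mp htwo).resolve_left two_ne_zero

/-- Theorem 2.6, Claim 1: In a unital C*-algebra, if `σ(a x) = σ(b x)` for all
`x` and `a` is self-adjoint, then `b` is self-adjoint. -/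
theorem isSelfAdjoint_of_spectrum_mul_eq
    {A : Type*} [NormedRing A] [StarRing A] [CStarRing A] [CompleteSpace A]
    [NormedAlgebra ℂ A] [StarModule ℂ A]
    (a b : A)
    (h : ∀ x : A, spectrum ℂ (a * x) = spectrum ℂ (b * x))
    (ha : a = star a) :
    b = star b := by
  let _ : CStarAlgebra A := { }
  have ha' : IsSelfAdjoint a := ha.symm
  have hσb : spectrum ℂ b = spectrum ℂ a := by simpa using (h 1).symm
  have hσa : spectrum ℂ a ⊆ Set.range Complex.ofReal := fun z hz ↦
    ⟨z.re, (ha'.mem_spectrum_eq_re hz).symm⟩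
  have hσ : spectrum ℂ (b - star b) ⊆ Set.range Complex.ofReal := by
    refine (spectrum.sub_subset_insert_zero_of_one_mem_mul fun y ↦
      (spectrum.one_mem_star_mul_iff_of_spectrum_mul_eq h ha' y).mp).trans ?_
    rw [hσb]
    exact Set.insert_subset ⟨0, Complex.ofReal_zero⟩ hσa
  have hskew : b - star b ∈ skewAdjoint A := by
    rw [skewAdjoint.mem_iff, star_sub, star_star, neg_sub]
  exact sub_eq_zero.mp (eq_zero_of_mem_skewAdjoint_of_spectrum_subset_range_ofReal hskew hσ)
end

section
/- Let A be a unital C*-algebra and let a, b ∈ A satisfy σ(a·x) = σ(b·x) for all x ∈ A. If a is self-adjoint (a = a*), then a·b = b·a. -/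
/-! If `σ(a x) = σ(b x)` for all `x`, then `w * b * z = 0` whenever `w * a * z = 0`: the elements
`w * b * z * y` and `w * a * z * y` have the same nonzero spectrum, so `w * b * z * y` is
quasinilpotent for every `y`, and in a C⋆-algebra this forces `w * b * z = 0`. For self-adjoint `a`
this says `g(a) * b * f(a) = 0` whenever `f * g = 0`. Cutting `b` by a partition of unity of unit
tents `u j = tent j (a)` writes `b` as the sum of the nine bands
`∑ j ≡ r [3], u j * b * u (j + d)` with `d ∈ {-1, 0, 1}`; since the tents of one band have
disjoint supports, each band has commutator with `a` of norm at most `3 * ‖b‖`. Hence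
`‖a * b - b * a‖ ≤ 27 * ‖b‖`, and replacing `a` by `t • a` for large `t` gives `a * b = b * a`. -/

open Finset

noncomputable def ramp (x : ℝ) : ℝ := max 0 (min 1 x)

/-- The piecewise linear hat of height `1` at `j`, supported on `[j - 1, j + 1]`. -/
noncomputable def tent (j : ℤ) (s : ℝ) : ℝ := ramp (s - j + 1) - ramp (s - j)

@[fun_prop]
lemma continuous_ramp : Continuous ramp :=
  continuous_const.max (continuous_const.min continuous_id)

lemma monotone_ramp : Monotone ramp :=
  fun _ _ h => max_le_max le_rfl (min_le_min le_rfl h)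

lemma ramp_of_one_le {x : ℝ} (hx : 1 ≤ x) : ramp x = 1 := by
  simp [ramp, min_eq_left hx]

lemma ramp_of_nonpos {x : ℝ} (hx : x ≤ 0) : ramp x = 0 := by
  simp [ramp, hx]

@[fun_prop]
lemma continuous_tent (j : ℤ) : Continuous (tent j) := by
  unfold tent; fun_prop

lemma tent_nonneg (j : ℤ) (s : ℝ) : 0 ≤ tent j s :=
  sub_nonneg.2 (monotone_ramp (by linarith))

lemma tent_le_one (j : ℤ) (s : ℝ) : tent j s ≤ 1 := by
  have h1 : ramp (s - j + 1) ≤ 1 := max_le zero_le_one (min_le_left _ _)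
  have h2 : 0 ≤ ramp (s - j) := le_max_left _ _
  unfold tent; linarith

lemma abs_sub_lt_one_of_tent_ne_zero {j : ℤ} {s : ℝ} (h : tent j s ≠ 0) : |s - j| < 1 := by
  refine abs_lt.2 ⟨?_, ?_⟩ <;> by_contra! hs <;> apply h
  · rw [tent, ramp_of_nonpos (by linarith), ramp_of_nonpos (by linarith), sub_zero]
  · rw [tent, ramp_of_one_le (by linarith), ramp_of_one_le hs, sub_self]

lemma tent_mul_tent_eq_zero {j k : ℤ} (hjk : 2 ≤ |j - k|) (s : ℝ) :
    tent j s * tent k s = 0 := by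
  by_contra! h
  have hj := abs_sub_lt_one_of_tent_ne_zero (left_ne_zero_of_mul h)
  have hk := abs_sub_lt_one_of_tent_ne_zero (right_ne_zero_of_mul h)
  have : |((j - k : ℤ) : ℝ)| < 2 := by
    push_cast
    calc |(j : ℝ) - k| = |(s - k) - (s - j)| := by ring_nf
      _ ≤ |s - k| + |s - j| := abs_sub _ _
      _ < 2 := by linarith
  rw [← Int.cast_abs] at this
  exact absurd hjk (not_le.2 (by exact_mod_cast this))

lemma tent_mul_sum_tent_add_eq (j : ℤ) (s : ℝ) :
    tent j s * ∑ d ∈ Icc (-1 : ℤ) 1, tent (j + d) s = tent j s := by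
  by_cases h : tent j s = 0
  · rw [h, zero_mul]
  have hs := abs_lt.1 (abs_sub_lt_one_of_tent_ne_zero h)
  have : ∑ d ∈ Icc (-1 : ℤ) 1, tent (j + d) s = ramp (s - j + 2) - ramp (s - j - 1) := by
    rw [show Icc (-1 : ℤ) 1 = {-1, 0, 1} by rfl, sum_insert (by decide), sum_pair (by decide)]
    simp only [tent]
    push_cast
    ring_nf
  rw [this, ramp_of_one_le (by linarith), ramp_of_nonpos (by linarith), sub_zero, mul_one]

lemma exists_sum_tent_eq_one (M : ℝ) :
    ∃ J : Finset ℤ, ∀ s, |s| ≤ M → ∑ j ∈ J, tent j s = 1 := by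
  obtain ⟨N, hN⟩ := exists_nat_ge M
  refine ⟨(range (2 * N + 1)).image fun i : ℕ => (i : ℤ) - N, fun s hs => ?_⟩
  rw [sum_image (by intro i _ k _ h; simpa using h)]
  have hs' := abs_le.1 (hs.trans hN)
  have := sum_range_sub' (fun i : ℕ => ramp (s + N + 1 - i)) (2 * N + 1)
  convert this using 1
  · refine sum_congr rfl fun i _ => ?_
    simp only [tent]; push_cast; ring_nf
  · push_cast
    rw [ramp_of_one_le (by linarith), ramp_of_nonpos (by linarith), sub_zero]

lemma sum_mul_mul_sum_eq_sum {ι R : Type*} [NonUnitalNonAssocSemiring R] (s : Finset ι)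
    (x y : ι → R) (b : R) (h : ∀ i ∈ s, ∀ j ∈ s, i ≠ j → x i * b * y j = 0) :
    (∑ i ∈ s, x i) * b * ∑ j ∈ s, y j = ∑ i ∈ s, x i * b * y i := by
  rw [sum_mul, sum_mul]
  refine sum_congr rfl fun i hi => ?_
  rw [mul_sum]
  exact sum_eq_single_of_mem i hi fun j hj hji => h i hi j hj hji.symm

lemma mul_sum_sub_sum_mul_eq {ι K R : Type*} [CommRing K] [Ring R] [Algebra K R]
    (s : Finset ι) (a b : R) (c : ι → K) (u v : ι → R)
    (h : ∀ i ∈ s, ∀ j ∈ s, i ≠ j → u i * b * v j = 0) :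
    a * (∑ j ∈ s, u j * b * v j) - (∑ j ∈ s, u j * b * v j) * a
      = (∑ j ∈ s, (a - algebraMap K R (c j)) * u j) * b * ∑ j ∈ s, v j
        - (∑ j ∈ s, u j) * b * ∑ j ∈ s, v j * (a - algebraMap K R (c j)) := by
  rw [sum_mul_mul_sum_eq_sum _ _ _ _ fun i hi j hj hij => by
      rw [mul_assoc _ (u i), mul_assoc _ (u i * b), h i hi j hj hij, mul_zero],
    sum_mul_mul_sum_eq_sum _ _ _ _ fun i hi j hj hij => by
      rw [← mul_assoc, h i hi j hj hij, zero_mul],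
    mul_sum, sum_mul, ← sum_sub_distrib, ← sum_sub_distrib]
  refine sum_congr rfl fun j _ => ?_
  simp only [Algebra.algebraMap_eq_smul_one, sub_mul, mul_sub, smul_mul_assoc, mul_smul_comm,
    one_mul, mul_one, mul_assoc]
  abel

section CStarAlgebra

variable {A : Type*} [CStarAlgebra A]

lemma eq_zero_of_forall_spectrum_mul_subset_zero {z : A}
    (hz : ∀ y, spectrum ℂ (z * y) ⊆ {0}) : z = 0 := by
  have : z * star z = 0 := CFC.eq_zero_of_spectrum_subset_zero (R := ℂ) _ (hz _)
  simpa using this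

lemma mul_mul_eq_zero_of_spectrum_mul_eq {a b : A}
    (h : ∀ x, spectrum ℂ (a * x) = spectrum ℂ (b * x)) {w z : A} (hw : w * a * z = 0) :
    w * b * z = 0 := by
  nontriviality A
  refine eq_zero_of_forall_spectrum_mul_subset_zero fun y t ht => ?_
  by_contra ht0
  have key : spectrum ℂ (w * b * z * y) \ {0} = spectrum ℂ (w * a * z * y) \ {0} := calc
    _ = spectrum ℂ (b * (z * y * w)) \ {0} := by
      simpa only [mul_assoc] using spectrum.nonzero_mul_comm w (b * (z * y))
    _ = spectrum ℂ (w * a * z * y) \ {0} := by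
      rw [← h]; simpa only [mul_assoc] using (spectrum.nonzero_mul_comm w (a * (z * y))).symm
  have : t ∈ spectrum ℂ (w * a * z * y) \ {0} := key ▸ ⟨ht, ht0⟩
  simp [hw, spectrum.zero_eq] at this

lemma cfc_mul_mul_cfc_eq_zero {a b : A} (ha : IsSelfAdjoint a)
    (hab : ∀ w z : A, w * a * z = 0 → w * b * z = 0) {f g : ℝ → ℝ}
    (hf : Continuous f) (hg : Continuous g) (hfg : ∀ s, f s * g s = 0) :
    cfc f a * b * cfc g a = 0 := by
  refine hab _ _ ?_
  conv_lhs => enter [1, 2]; rw [← cfc_id' ℝ a]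
  rw [← cfc_mul .., ← cfc_mul ..]
  simp_rw [mul_right_comm _ _ (g _), hfg, zero_mul]
  exact cfc_zero ℝ a

lemma cfc_tent_mul_eq_sum {a b : A} (ha : IsSelfAdjoint a)
    (hab : ∀ w z : A, w * a * z = 0 → w * b * z = 0) (j : ℤ) :
    cfc (tent j) a * b = ∑ d ∈ Icc (-1 : ℤ) 1, cfc (tent j) a * b * cfc (tent (j + d)) a := by
  have h := cfc_mul_mul_cfc_eq_zero ha hab (continuous_tent j)
    (g := fun s => 1 - ∑ d ∈ Icc (-1 : ℤ) 1, tent (j + d) s)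
    (continuous_const.sub (continuous_finsetSum _ fun d _ => continuous_tent (j + d)))
    fun s => by rw [mul_sub, mul_one, tent_mul_sum_tent_add_eq, sub_self]
  rwa [cfc_sub .., cfc_const_one .., ← sum_fn, cfc_sum .., mul_sub, mul_one, mul_sum,
    sub_eq_zero] at h

lemma exists_sum_cfc_tent_eq_one {a : A} (ha : IsSelfAdjoint a) :
    ∃ J : Finset ℤ, ∑ j ∈ J, cfc (tent j) a = 1 := by
  nontriviality A
  obtain ⟨J, hJ⟩ := exists_sum_tent_eq_one ‖a‖
  refine ⟨J, ?_⟩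
  rw [← cfc_sum .., ← cfc_const_one ℝ a]
  refine cfc_congr fun s hs => ?_
  simpa using hJ s (by simpa using spectrum.norm_le_norm_of_mem hs)

lemma norm_sum_cfc_mul_tent_le (a : A) (I : Finset ℤ) {k : ℤ → ℤ}
    (hI : ∀ i ∈ I, ∀ j ∈ I, i ≠ j → 2 ≤ |k i - k j|) {w : ℤ → ℝ → ℝ}
    (hw : ∀ j, Continuous (w j)) {C : ℝ} (hC : 0 ≤ C)
    (hwC : ∀ j (s : ℝ), |s - k j| < 1 → |w j s| ≤ C) :
    ‖∑ j ∈ I, cfc (fun s => w j s * tent (k j) s) a‖ ≤ C := by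
  rw [← cfc_sum .., sum_fn]
  refine norm_cfc_le hC fun s _ => ?_
  rw [Real.norm_eq_abs]
  by_cases h : ∃ i ∈ I, tent (k i) s ≠ 0
  · obtain ⟨i, hi, hne⟩ := h
    rw [sum_eq_single_of_mem i hi fun j hj hji => ?_]
    · rw [abs_mul, abs_of_nonneg (tent_nonneg _ _)]
      exact (mul_le_of_le_one_right (abs_nonneg _) (tent_le_one _ _)).trans
        (hwC i s (abs_sub_lt_one_of_tent_ne_zero hne))
    · have := tent_mul_tent_eq_zero (hI j hj i hi hji) s
      rw [(mul_eq_zero.1 this).resolve_right hne, mul_zero]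
  · push Not at h
    rw [sum_eq_zero fun i hi => by rw [h i hi, mul_zero], abs_zero]
    exact hC

lemma sub_algebraMap_mul_cfc {a : A} (ha : IsSelfAdjoint a) (c : ℝ) {f : ℝ → ℝ}
    (hf : Continuous f) : (a - algebraMap ℝ A c) * cfc f a = cfc (fun s => (s - c) * f s) a := by
  rw [cfc_mul (fun s => s - c) f a, cfc_sub .., cfc_id' .., cfc_const ..]

lemma cfc_mul_sub_algebraMap {a : A} (ha : IsSelfAdjoint a) (c : ℝ) {f : ℝ → ℝ}
    (hf : Continuous f) : cfc f a * (a - algebraMap ℝ A c) = cfc (fun s => (s - c) * f s) a := by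
  simp_rw [mul_comm _ (f _)]
  rw [cfc_mul f (fun s => s - c) a, cfc_sub .., cfc_id' .., cfc_const ..]

lemma norm_mul_sub_mul_sum_tent_le {a b : A} (ha : IsSelfAdjoint a)
    (hab : ∀ w z : A, w * a * z = 0 → w * b * z = 0) {I : Finset ℤ}
    (hI : ∀ i ∈ I, ∀ j ∈ I, i ≠ j → 3 ≤ |i - j|) {d : ℤ} (hd : |d| ≤ 1) :
    ‖a * (∑ j ∈ I, cfc (tent j) a * b * cfc (tent (j + d)) a)
      - (∑ j ∈ I, cfc (tent j) a * b * cfc (tent (j + d)) a) * a‖ ≤ 3 * ‖b‖ := by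
  have hI2 : ∀ i ∈ I, ∀ j ∈ I, i ≠ j → 2 ≤ |i - j| := fun i hi j hj hij =>
    (hI i hi j hj hij).trans' (by norm_num)
  have hId : ∀ i ∈ I, ∀ j ∈ I, i ≠ j → 2 ≤ |i + d - (j + d)| := fun i hi j hj hij => by
    simpa using hI2 i hi j hj hij
  have hcross : ∀ i ∈ I, ∀ j ∈ I, i ≠ j →
      cfc (tent i) a * b * cfc (tent (j + d)) a = 0 := fun i hi j hj hij => by
    refine cfc_mul_mul_cfc_eq_zero ha hab (continuous_tent _) (continuous_tent _)
      (tent_mul_tent_eq_zero ?_)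
    have h3 := hI i hi j hj hij
    rw [le_abs] at h3 ⊢
    rw [abs_le] at hd
    omega
  rw [mul_sum_sub_sum_mul_eq I a b (fun j : ℤ => (j : ℝ)) _ _ hcross]
  have hX : ‖∑ j ∈ I, (a - algebraMap ℝ A j) * cfc (tent j) a‖ ≤ 1 := by
    simp_rw [sub_algebraMap_mul_cfc ha _ (continuous_tent _)]
    exact norm_sum_cfc_mul_tent_le a I (k := id) hI2 (w := fun j s => s - j) (by fun_prop)
      zero_le_one fun j s h => h.le
  have hU : ‖∑ j ∈ I, cfc (tent j) a‖ ≤ 1 := by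
    simpa using norm_sum_cfc_mul_tent_le a I (k := id) hI2 (w := fun _ _ => 1) (by fun_prop)
      zero_le_one fun _ _ _ => by simp
  have hV : ‖∑ j ∈ I, cfc (tent (j + d)) a‖ ≤ 1 := by
    simpa using norm_sum_cfc_mul_tent_le a I (k := (· + d)) hId (w := fun _ _ => 1)
      (by fun_prop) zero_le_one fun _ _ _ => by simp
  have hY : ‖∑ j ∈ I, cfc (tent (j + d)) a * (a - algebraMap ℝ A j)‖ ≤ 2 := by
    simp_rw [cfc_mul_sub_algebraMap ha _ (continuous_tent _)]
    refine norm_sum_cfc_mul_tent_le a I (k := (· + d)) hId (w := fun j s => s - j) (by fun_prop)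
      zero_le_two fun j s hs => ?_
    have hd' : |(d : ℝ)| ≤ 1 := by exact_mod_cast hd
    calc |s - j| = |(s - ↑(j + d)) + d| := by push_cast; ring_nf
      _ ≤ |s - ↑(j + d)| + |(d : ℝ)| := abs_add_le _ _
      _ ≤ 2 := by linarith
  calc _ ≤ _ := norm_sub_le _ _
    _ ≤ 1 * ‖b‖ * 1 + 1 * ‖b‖ * 2 :=
      add_le_add (norm_mul₃_le.trans (by gcongr)) (norm_mul₃_le.trans (by gcongr))
    _ = 3 * ‖b‖ := by ring

lemma norm_mul_sub_mul_le_of_forall_mul_mul_eq_zero {a b : A} (ha : IsSelfAdjoint a)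
    (hab : ∀ w z : A, w * a * z = 0 → w * b * z = 0) : ‖a * b - b * a‖ ≤ 27 * ‖b‖ := by
  obtain ⟨J, hJ⟩ := exists_sum_cfc_tent_eq_one ha
  set B : ℤ → ℤ → A := fun d r =>
    ∑ j ∈ J with j % 3 = r, cfc (tent j) a * b * cfc (tent (j + d)) a
  have hb : b = ∑ d ∈ Icc (-1 : ℤ) 1, ∑ r ∈ Ico (0 : ℤ) 3, B d r := calc
    b = ∑ j ∈ J, cfc (tent j) a * b := by rw [← sum_mul, hJ, one_mul]
    _ = ∑ d ∈ Icc (-1 : ℤ) 1, ∑ j ∈ J, cfc (tent j) a * b * cfc (tent (j + d)) a := by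
      rw [sum_comm]; exact sum_congr rfl fun j _ => cfc_tent_mul_eq_sum ha hab j
    _ = _ := sum_congr rfl fun d _ => (sum_fiberwise_of_maps_to (g := (· % 3))
      (fun j _ => by simp [Int.emod_nonneg, Int.emod_lt_of_pos]) _).symm
  have hBd : ∀ d ∈ Icc (-1 : ℤ) 1, ∀ r, ‖a * B d r - B d r * a‖ ≤ 3 * ‖b‖ :=
    fun d hd r => norm_mul_sub_mul_sum_tent_le ha hab
      (fun i hi j hj hij => by
        simp only [mem_filter] at hi hj
        rw [le_abs]; omega)
      (abs_le.2 (by simpa using hd))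
  calc ‖a * b - b * a‖
      = ‖∑ d ∈ Icc (-1 : ℤ) 1, ∑ r ∈ Ico (0 : ℤ) 3, (a * B d r - B d r * a)‖ := by
        conv_lhs => rw [hb]
        simp only [mul_sum, sum_mul, sum_sub_distrib]
    _ ≤ ∑ d ∈ Icc (-1 : ℤ) 1, ∑ r ∈ Ico (0 : ℤ) 3, 3 * ‖b‖ :=
        (norm_sum_le _ _).trans <| sum_le_sum fun d hd =>
          (norm_sum_le _ _).trans <| sum_le_sum fun r _ => hBd d hd r
    _ = 27 * ‖b‖ := by simp; ring

end CStarAlgebra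

/-- Theorem 2.6, Claim 2: In a unital C*-algebra, if `σ(a x) = σ(b x)` for all
`x` and `a` is self-adjoint, then `a` and `b` commute. -/
theorem commute_of_spectrum_mul_eq
    {A : Type*} [NormedRing A] [StarRing A] [CStarRing A] [CompleteSpace A]
    [NormedAlgebra ℂ A] [StarModule ℂ A]
    (a b : A)
    (h : ∀ x : A, spectrum ℂ (a * x) = spectrum ℂ (b * x))
    (ha : a = star a) :
    a * b = b * a := by
  let : CStarAlgebra A := { }
  have hbound : ∀ t : ℝ, 0 < t → t * ‖a * b - b * a‖ ≤ 27 * ‖b‖ := fun t ht => by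
    have hta : ∀ w z : A, w * (t • a) * z = 0 → w * b * z = 0 := fun w z hw =>
      mul_mul_eq_zero_of_spectrum_mul_eq h <| by
        rwa [mul_smul_comm, smul_mul_assoc, smul_eq_zero, or_iff_right ht.ne'] at hw
    have := norm_mul_sub_mul_le_of_forall_mul_mul_eq_zero
      ((IsSelfAdjoint.all t).smul ha.symm) hta
    rwa [smul_mul_assoc, mul_smul_comm, ← smul_sub, norm_smul, Real.norm_of_nonneg ht.le] at this
  refine sub_eq_zero.1 (norm_le_zero_iff.1 (le_of_not_gt fun hpos => ?_))
  have := hbound ((27 * ‖b‖ + 1) / ‖a * b - b * a‖) (by positivity)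
  rw [div_mul_cancel₀ _ hpos.ne'] at this
  linarith
end

section
/- Let A be a unital C*-algebra and let a, b ∈ A satisfy σ(a·x) = σ(b·x) for all x ∈ A. If a is self-adjoint (a = a*), then a = b. -/
/-!
Put `c = b⋆ - a = (b - a)⋆`. Using `σ(xy) ∖ {0} = σ(yx) ∖ {0}` and `σ(x⋆) = σ(x)⋆`, the hypothesis
also gives `σ(a x) ∖ {0} = σ(b⋆ x) ∖ {0}` for all `x`. Whenever `σ(p x) ∖ {0} = σ(q x) ∖ {0}` for
all `x`, every nonzero `λ ∈ σ((q - p) y)` has both `λ` and `-λ` in `σ(p y)`: if `λ + p y` is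
invertible, test the hypothesis on `x = y (λ + p y)⁻¹`. With `q = b⋆`, `y = a` this forces
`σ(c a) ⊆ {0}`, since `σ(a a)` is nonnegative; hence `σ(a c) ⊆ {0}`. With `q = b`, `y = c` it then
forces `σ((b - a)(b - a)⋆) ⊆ {0}`, so the self-adjoint element `(b - a)(b - a)⋆` vanishes.
-/

open Set

section Ring

variable {𝕜 A : Type*} [Field 𝕜] [Ring A] [Algebra 𝕜 A]

theorem spectrum_sub_mul_sdiff_zero_subset_neg {p q : A}
    (hpq : ∀ x, spectrum 𝕜 (q * x) \ {0} ⊆ spectrum 𝕜 (p * x)) (y : A) :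
    spectrum 𝕜 ((q - p) * y) \ {0} ⊆ -spectrum 𝕜 (p * y) := by
  rintro l ⟨hl, hl0⟩
  rw [mem_neg, spectrum.mem_iff]
  intro hu
  obtain ⟨u, hu⟩ : IsUnit (algebraMap 𝕜 A l + p * y) := by
    simpa [map_neg, sub_eq_add_neg, add_comm] using hu.neg
  have hpx : 1 - p * (y * ↑u⁻¹) = algebraMap 𝕜 A l * ↑u⁻¹ := by
    rw [sub_eq_iff_eq_add, ← mul_assoc, ← add_mul, ← hu, u.mul_inv]
  have hp : 1 ∉ spectrum 𝕜 (p * (y * ↑u⁻¹)) := by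
    rw [spectrum.notMem_iff, map_one, hpx]
    exact ((isUnit_iff_ne_zero.mpr hl0).map _).mul u⁻¹.isUnit
  have hq : IsUnit (1 - q * (y * ↑u⁻¹)) := by
    simpa [spectrum.notMem_iff] using fun h1 => hp (hpq _ ⟨h1, one_ne_zero⟩)
  have hqu : (1 - q * (y * ↑u⁻¹)) * ↑u = algebraMap 𝕜 A l - (q - p) * y := by
    rw [sub_mul, one_mul, mul_assoc, mul_assoc, u.inv_mul, mul_one, hu]
    noncomm_ring
  exact spectrum.mem_iff.mp hl (hqu ▸ hq.mul u.isUnit)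

theorem spectrum_sub_mul_sdiff_zero_subset {p q : A}
    (hpq : ∀ x, spectrum 𝕜 (p * x) \ {0} = spectrum 𝕜 (q * x) \ {0}) (y : A) :
    spectrum 𝕜 ((q - p) * y) \ {0} ⊆ spectrum 𝕜 (p * y) ∩ -spectrum 𝕜 (p * y) := by
  intro l hl
  refine ⟨?_, spectrum_sub_mul_sdiff_zero_subset_neg
    (fun x => (hpq x).symm.subset.trans sdiff_subset) y hl⟩
  have hl_neg : -l ∈ spectrum 𝕜 ((p - q) * y) \ {0} := by
    rw [← neg_sub, neg_mul, ← spectrum.neg_eq]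
    simpa using hl
  have hq := spectrum_sub_mul_sdiff_zero_subset_neg
    (fun x => (hpq x).subset.trans sdiff_subset) y hl_neg
  rw [mem_neg, neg_neg] at hq
  exact ((hpq y).symm.subset ⟨hq, hl.2⟩).1

end Ring

theorem spectrum_star_mul_sdiff_zero_eq {𝕜 A : Type*} [Field 𝕜] [StarRing 𝕜] [Ring A]
    [StarRing A] [Algebra 𝕜 A] [StarModule 𝕜 A] {a b : A}
    (h : ∀ x, spectrum 𝕜 (a * x) \ {0} = spectrum 𝕜 (b * x) \ {0}) (x : A) :
    spectrum 𝕜 (star a * x) \ {0} = spectrum 𝕜 (star b * x) \ {0} := by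
  have hstar (c : A) :
      spectrum 𝕜 (star c * x) \ {0} = star (spectrum 𝕜 (c * star x) \ {0}) := by
    rw [spectrum.nonzero_mul_comm, ← star_star c, ← star_mul, spectrum.map_star, star_star]
    ext; simp
  rw [hstar, hstar, h]

theorem spectrum_inter_neg_subset_zero_of_nonneg {𝕜 A : Type*} [CommRing 𝕜] [PartialOrder 𝕜]
    [IsOrderedAddMonoid 𝕜] [Ring A] [PartialOrder A] [Algebra 𝕜 A] [NonnegSpectrumClass 𝕜 A]
    {x : A} (hx : 0 ≤ x) : spectrum 𝕜 x ∩ -spectrum 𝕜 x ⊆ {0} := by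
  rintro l ⟨hl, hnl⟩
  exact le_antisymm (neg_nonneg.mp (spectrum_nonneg_of_nonneg hx hnl))
    (spectrum_nonneg_of_nonneg hx hl)

open ComplexOrder in
theorem IsSelfAdjoint.spectrum_mul_self_inter_neg_subset_zero {A : Type*} [CStarAlgebra A]
    {a : A} (ha : IsSelfAdjoint a) : spectrum ℂ (a * a) ∩ -spectrum ℂ (a * a) ⊆ {0} := by
  let _ := CStarAlgebra.spectralOrder A
  have := CStarAlgebra.spectralOrderedRing A
  exact spectrum_inter_neg_subset_zero_of_nonneg ha.mul_self_nonneg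

theorem eq_zero_of_spectrum_mul_star_self_subset_zero {A : Type*} [CStarAlgebra A] {x : A}
    (hx : spectrum ℂ (x * star x) ⊆ {0}) : x = 0 :=
  CStarRing.mul_star_self_eq_zero_iff x |>.mp (CFC.eq_zero_of_spectrum_subset_zero _ hx)

/-- Theorem 2.6, Claim 3: In a unital C*-algebra, if `σ(a x) = σ(b x)` for all
`x` and `a` is self-adjoint, then `a = b`. -/
theorem eq_of_spectrum_mul_eq_selfAdjoint
    {A : Type*} [NormedRing A] [StarRing A] [CStarRing A] [CompleteSpace A]
    [NormedAlgebra ℂ A] [StarModule ℂ A]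
    (a b : A)
    (h : ∀ x : A, spectrum ℂ (a * x) = spectrum ℂ (b * x))
    (ha : a = star a) :
    a = b := by
  let _ : CStarAlgebra A := { }
  have hb (x : A) : spectrum ℂ (a * x) \ {0} = spectrum ℂ (b * x) \ {0} := by rw [h x]
  have hb_star (x : A) : spectrum ℂ (a * x) \ {0} = spectrum ℂ (star b * x) \ {0} := by
    simpa only [← ha] using spectrum_star_mul_sdiff_zero_eq hb x
  have hca : spectrum ℂ ((star b - a) * a) ⊆ {0} := by
    have := (spectrum_sub_mul_sdiff_zero_subset hb_star a).trans
      (IsSelfAdjoint.spectrum_mul_self_inter_neg_subset_zero ha.symm)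
    simpa using sdiff_subset_iff.mp this
  have hac : spectrum ℂ (a * (star b - a)) ⊆ {0} := by
    rw [← sdiff_eq_empty, spectrum.nonzero_mul_comm, sdiff_eq_empty]
    exact hca
  have hbc : spectrum ℂ ((b - a) * star (b - a)) ⊆ {0} := by
    rw [star_sub, ← ha]
    simpa using sdiff_subset_iff.mp
      ((spectrum_sub_mul_sdiff_zero_subset hb _).trans (inter_subset_left.trans hac))
  exact (sub_eq_zero.mp (eq_zero_of_spectrum_mul_star_self_subset_zero hbc)).symm
end

section
/- Let A be a unital C*-algebra and let a, b ∈ A. Then the following are equivalent: (i) r(a·x) ≤ r(b·x) for all x ∈ A; (ii) ‖y·a·z‖ ≤ ‖y·b·z‖ for all y, z ∈ A. -/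
/-!
If `r(a x) ≤ r(b x)` for all `x`, put `c = y a z` and `d = y b z`. The C*-identity and cyclicity of
the nonzero spectrum give `‖c‖² = r(c c*) = r(a · z c* y) ≤ r(b · z c* y) = r(c* d) ≤ ‖c‖ ‖d‖`.
Conversely, applying `‖y a z‖ ≤ ‖y b z‖` one factor at a time gives `‖(a x)ⁿ‖ ≤ ‖(b x)ⁿ‖`, and
Gelfand's formula turns this into `r(a x) ≤ r(b x)`.
-/

open scoped ENNReal

theorem spectralRadius_mul_comm {𝕜 A : Type*} [NormedField 𝕜] [Ring A] [Algebra 𝕜 A] (a b : A) :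
    spectralRadius 𝕜 (a * b) = spectralRadius 𝕜 (b * a) := by
  suffices ∀ a b : A, spectralRadius 𝕜 (a * b) ≤ spectralRadius 𝕜 (b * a) from
    le_antisymm (this a b) (this b a)
  intro a b
  refine iSup₂_le fun k hk => ?_
  rcases eq_or_ne k 0 with rfl | hk0
  · simp
  · have hk' : k ∈ spectrum 𝕜 (b * a) \ {0} :=
      spectrum.nonzero_mul_comm (𝕜 := 𝕜) a b ▸ ⟨hk, hk0⟩
    exact le_iSup₂ (f := fun l (_ : l ∈ spectrum 𝕜 (b * a)) => (‖l‖₊ : ℝ≥0∞)) k hk'.1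

theorem spectralRadius_le_of_forall_norm_pow_le {A : Type*} [NormedRing A] [NormedAlgebra ℂ A]
    [CompleteSpace A] {u v : A} (h : ∀ n : ℕ, ‖u ^ n‖ ≤ ‖v ^ n‖) :
    spectralRadius ℂ u ≤ spectralRadius ℂ v :=
  le_of_tendsto_of_tendsto' (spectrum.pow_nnnorm_pow_one_div_tendsto_nhds_spectralRadius u)
    (spectrum.pow_nnnorm_pow_one_div_tendsto_nhds_spectralRadius v)
    fun n => ENNReal.rpow_le_rpow (mod_cast h n) (by positivity)

theorem norm_pow_mul_le_of_forall_norm_mul_mul_le {A : Type*} [Ring A] [Norm A] {a b : A}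
    (h : ∀ y z : A, ‖y * a * z‖ ≤ ‖y * b * z‖) (x : A) (n : ℕ) (w : A) :
    ‖(a * x) ^ n * w‖ ≤ ‖(b * x) ^ n * w‖ := by
  induction n generalizing w with
  | zero => simp
  | succ n ih =>
    calc ‖(a * x) ^ (n + 1) * w‖ = ‖(a * x) ^ n * a * (x * w)‖ := by noncomm_ring
      _ ≤ ‖(a * x) ^ n * b * (x * w)‖ := h _ _
      _ = ‖(a * x) ^ n * (b * x * w)‖ := by noncomm_ring
      _ ≤ ‖(b * x) ^ n * (b * x * w)‖ := ih _
      _ = ‖(b * x) ^ (n + 1) * w‖ := by noncomm_ring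

theorem norm_mul_mul_le_of_forall_spectralRadius_mul_le {A : Type*} [CStarAlgebra A] {a b : A}
    (h : ∀ x : A, spectralRadius ℂ (a * x) ≤ spectralRadius ℂ (b * x)) (y z : A) :
    ‖y * a * z‖ ≤ ‖y * b * z‖ := by
  nontriviality A
  set c := y * a * z
  set d := y * b * z
  have key : (‖c‖₊ : ℝ≥0∞) * ‖c‖₊ ≤ ‖c‖₊ * ‖d‖₊ :=
    calc (‖c‖₊ : ℝ≥0∞) * ‖c‖₊ = spectralRadius ℂ (c * star c) := by
          rw [(IsSelfAdjoint.mul_star_self c).spectralRadius_eq_nnnorm,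
            CStarRing.nnnorm_self_mul_star, ENNReal.coe_mul]
      _ = spectralRadius ℂ (a * (z * star c * y)) := by
          rw [show c * star c = y * (a * (z * star c)) by simp only [c, mul_assoc],
            spectralRadius_mul_comm, mul_assoc]
      _ ≤ spectralRadius ℂ (b * (z * star c * y)) := h _
      _ = spectralRadius ℂ (star c * d) := by
          rw [show b * (z * star c * y) = b * z * (star c * y) by noncomm_ring,
            spectralRadius_mul_comm,
            show star c * y * (b * z) = star c * d by simp only [d, mul_assoc]]
      _ ≤ ‖star c * d‖₊ := spectrum.spectralRadius_le_nnnorm _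
      _ ≤ ‖c‖₊ * ‖d‖₊ := by
          rw [← ENNReal.coe_mul, ENNReal.coe_le_coe, ← nnnorm_star c]
          exact nnnorm_mul_le _ _
  rcases eq_zero_or_pos ‖c‖₊ with hc | hc
  · simp [← coe_nnnorm, hc]
  · exact mod_cast le_of_mul_le_mul_left (mod_cast key : ‖c‖₊ * ‖c‖₊ ≤ ‖c‖₊ * ‖d‖₊) hc

/-- Lemma 3.2: In a unital C*-algebra, `r(a x) ≤ r(b x)` for all `x` iff
`‖y a z‖ ≤ ‖y b z‖` for all `y, z`. -/
theorem spectralRadius_le_iff_norm_le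
    {A : Type*} [NormedRing A] [StarRing A] [CStarRing A] [CompleteSpace A]
    [NormedAlgebra ℂ A] [StarModule ℂ A]
    (a b : A) :
    (∀ x : A, spectralRadius ℂ (a * x) ≤ spectralRadius ℂ (b * x)) ↔
      (∀ y z : A, ‖y * a * z‖ ≤ ‖y * b * z‖) := by
  let _ : CStarAlgebra A := {}
  refine ⟨norm_mul_mul_le_of_forall_spectralRadius_mul_le, fun h x => ?_⟩
  refine spectralRadius_le_of_forall_norm_pow_le fun n => ?_
  simpa using norm_pow_mul_le_of_forall_norm_mul_mul_le h x n 1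
end

section
/- Let A be a prime unital C*-algebra and let a, b ∈ A be such that r(a·x) ≤ r(b·x) for all x ∈ A. Define f : A → A by f(x) = a·x·b*·b − b·x·b*·a. Then f(x)·y·b* + f(y)·x·b* = 0 for all x, y ∈ A. -/
/-!
If `r(p t) ≤ r(q t)` for all `t`, the same holds for every conjugate `u p u⁻¹` by a unit `u`
commuting with `q`, since the spectral radius is invariant under conjugation. In a C⋆-algebra,
testing such an element `c` against `t = c⋆` gives `‖c‖² = r(c c⋆) ≤ ‖q‖ ‖c‖`. Hence the entire
function `z ↦ exp (z q) p exp (-z q)` is bounded by `‖q‖`, so constant by Liouville's theorem,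
and its derivative `q p - p q` at `0` vanishes. For `p = a z b⋆` and `q = b z b⋆` this says that
these two elements commute for every `z`; polarizing this quadratic identity in `z` gives the
claimed functional identity.
-/

open NormedSpace Bornology

section ConjugateUnits

variable {𝕜 A : Type*} [NormedField 𝕜] [Ring A] [Algebra 𝕜 A]

lemma spectralRadius_units_conjugate (a : A) (u : Aˣ) :
    spectralRadius 𝕜 (u * a * u⁻¹) = spectralRadius 𝕜 a := by
  rw [spectralRadius, spectrum.units_conjugate, spectralRadius]

lemma spectralRadius_units_conjugate' (a : A) (u : Aˣ) :
    spectralRadius 𝕜 (u⁻¹ * a * u) = spectralRadius 𝕜 a := by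
  simpa using spectralRadius_units_conjugate a u⁻¹

lemma spectralRadius_units_conjugate_mul_le {p q : A}
    (hpq : ∀ t, spectralRadius 𝕜 (p * t) ≤ spectralRadius 𝕜 (q * t))
    (u : Aˣ) (hu : Commute (u : A) q) (t : A) :
    spectralRadius 𝕜 (u * p * u⁻¹ * t) ≤ spectralRadius 𝕜 (q * t) :=
  calc spectralRadius 𝕜 (u * p * u⁻¹ * t)
      = spectralRadius 𝕜 (u * (p * (u⁻¹ * t * u)) * u⁻¹) := by simp [mul_assoc]
    _ = spectralRadius 𝕜 (p * (u⁻¹ * t * u)) := spectralRadius_units_conjugate _ u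
    _ ≤ spectralRadius 𝕜 (q * (u⁻¹ * t * u)) := hpq _
    _ = spectralRadius 𝕜 (u⁻¹ * (q * t) * u) := by
        simp only [← mul_assoc, hu.units_inv_left.eq]
    _ = spectralRadius 𝕜 (q * t) := spectralRadius_units_conjugate' _ u

end ConjugateUnits

lemma norm_le_norm_of_forall_spectralRadius_mul_le {A : Type*} [CStarAlgebra A] {c q : A}
    (h : ∀ t, spectralRadius ℂ (c * t) ≤ spectralRadius ℂ (q * t)) : ‖c‖ ≤ ‖q‖ := by
  rcases subsingleton_or_nontrivial A with _ | _
  · simp [norm_of_subsingleton]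
  have key : ‖c‖₊ * ‖c‖₊ ≤ ‖q‖₊ * ‖c‖₊ := by
    rw [← ENNReal.coe_le_coe, ← CStarRing.nnnorm_self_mul_star,
      ← (IsSelfAdjoint.mul_star_self c).spectralRadius_eq_nnnorm, ← nnnorm_star c]
    calc spectralRadius ℂ (c * star c) ≤ spectralRadius ℂ (q * star c) := h _
      _ ≤ ‖q * star c‖₊ := spectrum.spectralRadius_le_nnnorm _
      _ ≤ _ := ENNReal.coe_le_coe.2 (nnnorm_mul_le _ _)
  rcases eq_or_ne c 0 with rfl | hc
  · simp
  exact_mod_cast le_of_mul_le_mul_right key (nnnorm_pos.2 hc)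

section Liouville

variable {A : Type*} [NormedRing A] [NormedAlgebra ℂ A] [CompleteSpace A]

lemma commute_of_isBounded_range_exp_mul_mul_exp {p q : A}
    (h : IsBounded (Set.range fun z : ℂ => exp (z • q) * p * exp (z • -q))) : Commute p q := by
  have hconst (z : ℂ) : exp (z • q) * p * exp (z • -q) = p := by
    have hdiff : Differentiable ℂ fun z : ℂ => exp (z • q) * p * exp (z • -q) := by fun_prop
    simpa using hdiff.apply_eq_apply_of_bounded h z 0
  have hderiv : HasDerivAt (fun z : ℂ => exp (z • q) * p * exp (z • -q)) (q * p - p * q) 0 := by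
    refine (((hasDerivAt_exp_smul_const' q (0 : ℂ)).mul_const p).mul
      (hasDerivAt_exp_smul_const (-q) (0 : ℂ))).congr_deriv ?_
    simp [sub_eq_add_neg]
  rw [funext hconst] at hderiv
  exact (sub_eq_zero.1 (hderiv.unique (hasDerivAt_const 0 p))).symm

end Liouville

lemma commute_of_forall_spectralRadius_mul_le {A : Type*} [CStarAlgebra A] {p q : A}
    (h : ∀ t, spectralRadius ℂ (p * t) ≤ spectralRadius ℂ (q * t)) : Commute p q := by
  let _ : NormedAlgebra ℚ A := .restrictScalars ℚ ℂ A
  refine commute_of_isBounded_range_exp_mul_mul_exp <| isBounded_iff_forall_norm_le.2 ⟨‖q‖, ?_⟩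
  rintro - ⟨z, rfl⟩
  let _ := invertibleExp (z • q)
  let u : Aˣ := unitOfInvertible (exp (z • q))
  have := norm_le_norm_of_forall_spectralRadius_mul_le
    (spectralRadius_units_conjugate_mul_le h u ((Commute.refl q).smul_left z).exp_left)
  simpa [u, invOf_exp] using this

lemma polarized_commutator_eq_zero {R : Type*} [Ring R] {a b c : R}
    (h : ∀ z, Commute (a * z * c) (b * z * c)) (x y : R) :
    (a * x * c * b - b * x * c * a) * y * c + (a * y * c * b - b * y * c * a) * x * c = 0 := by
  have expand : (a * x * c * b - b * x * c * a) * y * c + (a * y * c * b - b * y * c * a) * x * c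
      = (a * (x + y) * c) * (b * (x + y) * c) - (b * (x + y) * c) * (a * (x + y) * c)
        - ((a * x * c) * (b * x * c) - (b * x * c) * (a * x * c))
        - ((a * y * c) * (b * y * c) - (b * y * c) * (a * y * c)) := by
    noncomm_ring
  rw [expand, (h x).eq, (h y).eq, (h (x + y)).eq]
  simp

theorem functional_identity_of_spectralRadius_le_general
    {A : Type*} [NormedRing A] [StarRing A] [CStarRing A] [CompleteSpace A]
    [NormedAlgebra ℂ A] [StarModule ℂ A]
    (a b : A)
    (h : ∀ x : A, spectralRadius ℂ (a * x) ≤ spectralRadius ℂ (b * x))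
    (f : A → A)
    (hf : ∀ x : A, f x = a * x * (star b) * b - b * x * (star b) * a) :
    ∀ x y : A, f x * y * (star b) + f y * x * (star b) = 0 := by
  let _ : CStarAlgebra A := { }
  have hcomm (z : A) : Commute (a * z * star b) (b * z * star b) :=
    commute_of_forall_spectralRadius_mul_le fun t => by
      simpa only [mul_assoc] using h (z * (star b * t))
  intro x y
  simpa only [hf] using polarized_commutator_eq_zero hcomm x y

/-- Theorem 3.8, Claim 2: In a prime unital C*-algebra, if `r(a x) ≤ r(b x)`
for all `x`, then `f(x) = a x b* b − b x b* a` satisfies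
`f(x) y b* + f(y) x b* = 0` for all `x, y`. -/
theorem functional_identity_of_spectralRadius_le
    {A : Type*} [NormedRing A] [StarRing A] [CStarRing A] [CompleteSpace A]
    [NormedAlgebra ℂ A] [StarModule ℂ A]
    (hprime : ∀ a b : A, (∀ x : A, a * x * b = 0) → a = 0 ∨ b = 0)
    (a b : A)
    (h : ∀ x : A, spectralRadius ℂ (a * x) ≤ spectralRadius ℂ (b * x))
    (f : A → A)
    (hf : ∀ x : A, f x = a * x * (star b) * b - b * x * (star b) * a) :
    ∀ x y : A, f x * y * (star b) + f y * x * (star b) = 0 :=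
  functional_identity_of_spectralRadius_le_general a b h f hf
end

section
/- Let A₀ be a complex unital Banach algebra and A a semisimple complex unital Banach algebra. Let φ : A₀ → A be a surjective ℂ-linear map satisfying σ(φ(x)·φ(y)·φ(z)) = σ(x·y·z) for all x, y, z ∈ A₀. Then φ(1) lies in the center Z(A) of A, φ(1)³ = 1, and φ(x·y) = φ(1)²·φ(x)·φ(y) for all x, y ∈ A₀. -/
/-!
For units `x, y` of `A₀`, surjectivity of `φ` gives `σ(φ 1 * φ (x * y) * w) = σ(φ x * φ y * w)`
for every `w : A`, and in a semisimple algebra two elements with this property, one of them a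
unit, coincide: if `σ(c * v) = σ(v)` for all `v`, then `(1 - c⁻¹) * g` is quasinilpotent for every
unit `g`, hence (maximum principle for the spectral radius of `t ↦ d * (w - t)` on a large circle)
for every `g`, so `1 - c⁻¹` lies in the radical. As every element of a Banach algebra is a sum of
two units, `φ 1 * φ (x * y) = φ x * φ y` for all `x, y`. Taking `y = 1` shows that `φ 1` is
central; then `φ 1 ^ 3 - 1` is central and quasinilpotent, hence zero.
-/

open Metric Filter
open scoped NNReal ENNReal

section SpectralRadius

variable {A : Type*} [NormedRing A]

theorem spectralRadius_eq_zero_iff {𝕜 : Type*} [NormedField 𝕜] [NormedAlgebra 𝕜 A] {a : A} :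
    spectralRadius 𝕜 a = 0 ↔ spectrum 𝕜 a ⊆ {0} := by
  simp [spectralRadius, Set.subset_def]

theorem spectralRadius_le_of_nnnorm_pow_le {𝕜 : Type*} [NormedField 𝕜] [NormedAlgebra 𝕜 A]
    [CompleteSpace A] [NormOneClass A] {a : A} {n : ℕ} (hn : n ≠ 0) {r : ℝ≥0}
    (h : ‖a ^ n‖₊ ≤ r ^ n) : spectralRadius 𝕜 a ≤ r := by
  rw [← ENNReal.pow_le_pow_left_iff hn]
  calc spectralRadius 𝕜 a ^ n ≤ spectralRadius 𝕜 (a ^ n) :=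
        spectrum.spectralRadius_pow_le a n hn
    _ ≤ ‖a ^ n‖₊ := spectrum.spectralRadius_le_nnnorm _
    _ ≤ (r : ℝ≥0∞) ^ n := mod_cast h

variable [NormedAlgebra ℂ A] [CompleteSpace A]

theorem eventually_nnnorm_pow_lt_of_spectralRadius_lt {a : A} {r : ℝ≥0}
    (h : spectralRadius ℂ a < r) : ∀ᶠ n in atTop, ‖a ^ n‖₊ < r ^ n := by
  filter_upwards [(spectrum.gelfand_formula a).eventually_lt_const h, eventually_ne_atTop 0]
    with n hlt hn
  rw [one_div, ← ENNReal.pow_lt_pow_left_iff hn, ENNReal.rpow_inv_natCast_pow hn] at hlt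
  exact mod_cast hlt

theorem spectralRadius_le_of_forall_mem_sphere [NormOneClass A] {f : ℂ → A}
    (hf : Differentiable ℂ f) {c : ℂ} {R : ℝ} (hR : 0 < R) {r : ℝ≥0}
    (h : ∀ t ∈ sphere c R, spectralRadius ℂ (f t) < r) : spectralRadius ℂ (f c) ≤ r := by
  set U : ℕ → Set ℂ := fun n => {t | ‖f t ^ 2 ^ n‖₊ < r ^ 2 ^ n}
  have hU_open (n : ℕ) : IsOpen (U n) :=
    isOpen_lt (hf.continuous.pow _).nnnorm continuous_const
  have hU_mono : Monotone U := monotone_nat_of_le_succ fun n t ht => by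
    change ‖f t ^ 2 ^ n‖₊ < r ^ 2 ^ n at ht
    change ‖f t ^ 2 ^ (n + 1)‖₊ < r ^ 2 ^ (n + 1)
    rw [pow_succ, pow_mul, pow_mul]
    calc ‖(f t ^ 2 ^ n) ^ 2‖₊ ≤ ‖f t ^ 2 ^ n‖₊ ^ 2 := nnnorm_pow_le' _ two_pos
      _ < (r ^ 2 ^ n) ^ 2 := pow_lt_pow_left₀ ht zero_le two_ne_zero
  have hcover : sphere c R ⊆ ⋃ n, U n := fun t ht => by
    obtain ⟨N, hN⟩ :=
      (eventually_nnnorm_pow_lt_of_spectralRadius_lt (h t ht)).exists_forall_of_atTop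
    exact Set.mem_iUnion.2 ⟨N, hN _ Nat.lt_two_pow_self.le⟩
  -- Compactness of the sphere gives one power `2 ^ N` that is small on all of it;
  -- the maximum modulus principle transports the bound to the centre.
  obtain ⟨N, hN⟩ :=
    (isCompact_sphere c R).elim_directed_cover U hU_open hcover hU_mono.directed_le
  have hmax : ‖f c ^ 2 ^ N‖ ≤ (r : ℝ) ^ 2 ^ N := by
    refine Complex.norm_le_of_forall_mem_frontier_norm_le isBounded_ball (hf.pow _).diffContOnCl
      (fun z hz => ?_) (subset_closure (mem_ball_self hR))
    rw [frontier_ball c hR.ne'] at hz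
    exact_mod_cast (hN hz).le
  exact spectralRadius_le_of_nnnorm_pow_le (pow_ne_zero _ two_ne_zero) (mod_cast hmax)

theorem spectralRadius_mul_eq_zero_of_forall_isUnit [NormOneClass A] {d : A}
    (hd : ∀ g, IsUnit g → spectralRadius ℂ (d * g) = 0) (w : A) :
    spectralRadius ℂ (d * w) = 0 := by
  refine le_antisymm (ENNReal.le_of_forall_pos_le_add fun r hr _ => ?_) zero_le
  have hf : Differentiable ℂ fun t : ℂ => d * (w - t • (1 : A)) :=
    ((differentiable_const w).sub (differentiable_id.smul_const 1)).const_mul d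
  have hle := spectralRadius_le_of_forall_mem_sphere hf (c := 0) (R := ‖w‖ + 1)
    (by positivity) (r := r) fun t ht => by
      rw [mem_sphere_zero_iff_norm] at ht
      have hunit : IsUnit (algebraMap ℂ A t - w) :=
        spectrum.mem_resolventSet_of_norm_lt (by linarith)
      rw [hd _ (by simpa [Algebra.algebraMap_eq_smul_one] using hunit.neg)]
      exact_mod_cast hr
  simpa using hle

theorem Commute.spectralRadius_mul_eq_zero [NormOneClass A] {a b : A} (hab : Commute a b)
    (ha : spectralRadius ℂ a = 0) : spectralRadius ℂ (a * b) = 0 := by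
  refine le_antisymm (ENNReal.le_of_forall_pos_le_add fun r hr _ => ?_) zero_le
  set s : ℝ≥0 := r / (‖b‖₊ + 1)
  have hs : spectralRadius ℂ a < s := by rw [ha]; exact_mod_cast div_pos hr (by positivity)
  obtain ⟨n, hpow, hn⟩ :=
    ((eventually_nnnorm_pow_lt_of_spectralRadius_lt hs).and (eventually_ne_atTop 0)).exists
  rw [zero_add]
  refine spectralRadius_le_of_nnnorm_pow_le hn ?_
  calc ‖(a * b) ^ n‖₊ = ‖a ^ n * b ^ n‖₊ := by rw [hab.mul_pow]
    _ ≤ ‖a ^ n‖₊ * ‖b‖₊ ^ n := (nnnorm_mul_le _ _).trans (by gcongr; exact nnnorm_pow_le _ _)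
    _ ≤ s ^ n * (‖b‖₊ + 1) ^ n := by gcongr; exact le_self_add
    _ = r ^ n := by rw [← _root_.mul_pow, div_mul_cancel₀ _ (by positivity)]

end SpectralRadius

section UnitsAndSpectrum

variable {𝕜 A : Type*} [Field 𝕜] [Ring A] [Algebra 𝕜 A]

theorem one_mem_spectrum_iff {a : A} : (1 : 𝕜) ∈ spectrum 𝕜 a ↔ ¬IsUnit (1 - a) := by
  rw [spectrum.mem_iff, map_one]

theorem spectrum_mul_subset_zero_of_forall_isUnit_one_sub {d : A}
    (h : ∀ g : A, IsUnit g → IsUnit (1 - d * g)) {g : A} (hg : IsUnit g) :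
    spectrum 𝕜 (d * g) ⊆ {0} := by
  intro t ht
  rw [Set.mem_singleton_iff]
  by_contra hne
  have hu : (Units.mk0 t hne)⁻¹ • t = 1 := by simp [Units.smul_def, hne]
  rw [← spectrum.smul_mem_smul_iff (r := (Units.mk0 t hne)⁻¹), hu, Units.smul_def,
    ← mul_smul_comm, one_mem_spectrum_iff] at ht
  refine ht (h _ ?_)
  rw [Algebra.smul_def]
  exact ((isUnit_iff_ne_zero.2 (inv_ne_zero hne)).map _).mul hg

theorem isUnit_one_sub_mul_of_forall_spectrum_mul_eq {c : Aˣ}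
    (h : ∀ v, spectrum 𝕜 ((c : A) * v) = spectrum 𝕜 v) {g : A} (hg : IsUnit g) :
    IsUnit (1 - (1 - ↑c⁻¹) * g) := by
  obtain ⟨H, rfl⟩ := hg
  have hH : IsUnit (1 - (c : A) * (1 - ↑H⁻¹)) := by
    have h1 : (1 : 𝕜) ∉ spectrum 𝕜 (1 - (↑H⁻¹ : A)) := by
      rw [one_mem_spectrum_iff, sub_sub_cancel, not_not]; exact H⁻¹.isUnit
    rwa [← h, one_mem_spectrum_iff, not_not] at h1
  have hfactor : 1 - (1 - ↑c⁻¹) * (H : A) = ↑c⁻¹ * (1 - c * (1 - ↑H⁻¹)) * H := by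
    simp only [mul_sub, sub_mul, mul_one, Units.inv_mul_cancel_left, Units.inv_mul, one_mul]
    abel
  rw [hfactor]
  exact (c⁻¹.isUnit.mul hH).mul H.isUnit

end UnitsAndSpectrum

def IsSpectrallySemisimple (A : Type*) [Ring A] [Algebra ℂ A] : Prop :=
  ∀ a : A, (∀ x : A, spectrum ℂ (a * x) = {0}) → a = 0

section Semisimple

variable {A : Type*} [NormedRing A] [NormedAlgebra ℂ A] [CompleteSpace A] [NormOneClass A]

theorem spectrum_eq_zero_iff_spectralRadius_eq_zero {a : A} :
    spectrum ℂ a = {0} ↔ spectralRadius ℂ a = 0 := by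
  have : Nontrivial A := NormOneClass.nontrivial
  rw [spectralRadius_eq_zero_iff, (spectrum.nonempty a).subset_singleton_iff]

theorem eq_one_of_forall_spectrum_mul_eq (hss : IsSpectrallySemisimple A)
    {c : A} (h : ∀ v, spectrum ℂ (c * v) = spectrum ℂ v) : c = 1 := by
  have hc : IsUnit c := spectrum.isUnit_of_zero_notMem ℂ <| by
    have : Nontrivial A := NormOneClass.nontrivial
    rw [← mul_one c, h 1, spectrum.one_eq]
    simp
  obtain ⟨c, rfl⟩ := hc
  have hd : (1 : A) - ↑c⁻¹ = 0 := hss _ fun x => by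
    refine spectrum_eq_zero_iff_spectralRadius_eq_zero.2 <|
      spectralRadius_mul_eq_zero_of_forall_isUnit (fun g hg => ?_) x
    exact spectralRadius_eq_zero_iff.2 <| spectrum_mul_subset_zero_of_forall_isUnit_one_sub
      (fun g hg => isUnit_one_sub_mul_of_forall_spectrum_mul_eq h hg) hg
  rw [sub_eq_zero, eq_comm, Units.val_eq_one, inv_eq_one] at hd
  rw [hd, Units.val_one]

theorem eq_of_forall_spectrum_mul_eq (hss : IsSpectrallySemisimple A)
    {p q : A} (hq : IsUnit q) (h : ∀ w, spectrum ℂ (p * w) = spectrum ℂ (q * w)) : p = q := by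
  obtain ⟨q, rfl⟩ := hq
  refine Units.mul_inv_eq_one.1 (eq_one_of_forall_spectrum_mul_eq hss fun v => ?_)
  rw [mul_assoc, h, Units.mul_inv_cancel_left]

theorem eq_one_of_forall_commute_of_spectrum_eq_one (hss : IsSpectrallySemisimple A)
    {u : A} (hu : ∀ w, Commute u w) (h : spectrum ℂ u = {1}) : u = 1 := by
  have hn : spectralRadius ℂ (u - 1) = 0 := by
    rw [← spectrum_eq_zero_iff_spectralRadius_eq_zero, ← map_one (algebraMap ℂ A),
      ← spectrum.sub_singleton_eq, h, Set.singleton_sub_singleton, sub_self]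
  refine sub_eq_zero.1 (hss _ fun w => ?_)
  exact spectrum_eq_zero_iff_spectralRadius_eq_zero.2
    (((hu w).sub_left (Commute.one_left w)).spectralRadius_mul_eq_zero hn)

end Semisimple

theorem isUnit_of_isUnit_mul_of_isUnit_mul {M : Type*} [Monoid M] {a b c : M}
    (hab : IsUnit (a * b)) (hca : IsUnit (c * a)) : IsUnit a :=
  isUnit_iff_exists_and_exists.2
    ⟨⟨b * ↑hab.unit⁻¹, by rw [← mul_assoc, IsUnit.mul_val_inv]⟩,
      ⟨↑hca.unit⁻¹ * c, by rw [mul_assoc, IsUnit.val_inv_mul]⟩⟩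

section SumOfUnits

variable {A : Type*} [NormedRing A] [CompleteSpace A] [NormOneClass A]

theorem exists_isUnit_add_isUnit (𝕜 : Type*) [NontriviallyNormedField 𝕜] [NormedAlgebra 𝕜 A]
    (x : A) : ∃ s t : A, IsUnit s ∧ IsUnit t ∧ s + t = x := by
  obtain ⟨k, hk⟩ := NormedField.exists_lt_norm 𝕜 ‖x‖
  have hk0 : k ≠ 0 := norm_pos_iff.1 ((norm_nonneg x).trans_lt hk)
  refine ⟨algebraMap 𝕜 A k, x - algebraMap 𝕜 A k, (isUnit_iff_ne_zero.2 hk0).map _, ?_,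
    add_sub_cancel _ _⟩
  rw [← neg_sub]
  exact (spectrum.mem_resolventSet_of_norm_lt hk : IsUnit _).neg

theorem eq_of_map_add_of_forall_isUnit (𝕜 : Type*) [NontriviallyNormedField 𝕜]
    [NormedAlgebra 𝕜 A] {M : Type*} [Add M] {f g : A → M}
    (hf : ∀ a b, f (a + b) = f a + f b) (hg : ∀ a b, g (a + b) = g a + g b)
    (h : ∀ a, IsUnit a → f a = g a) (x : A) : f x = g x := by
  obtain ⟨s, t, hs, ht, rfl⟩ := exists_isUnit_add_isUnit 𝕜 x
  rw [hf, hg, h s hs, h t ht]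

end SumOfUnits

theorem isUnit_map_of_isUnit_of_spectrum_triple_eq {A₀ A : Type*} [Ring A₀] [Algebra ℂ A₀]
    [Ring A] [Algebra ℂ A] (φ : A₀ →ₗ[ℂ] A)
    (hφ : ∀ x y z : A₀, spectrum ℂ (φ x * φ y * φ z) = spectrum ℂ (x * y * z))
    {x : A₀} (hx : IsUnit x) : IsUnit (φ x) := by
  obtain ⟨u, rfl⟩ := hx
  have hunit {a b c : A₀} (h : a * b * c = 1) : IsUnit (φ a * φ b * φ c) := by
    rw [← spectrum.zero_notMem_iff ℂ, hφ, h, spectrum.zero_notMem_iff]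
    exact isUnit_one
  refine isUnit_of_isUnit_mul_of_isUnit_mul (b := φ ↑u⁻¹ * φ 1) (c := φ 1 * φ ↑u⁻¹) ?_ ?_
  · rw [← mul_assoc]; exact hunit (by simp)
  · exact hunit (by simp)

theorem map_one_mul_map_mul_of_isUnit {A₀ : Type*} [Ring A₀] [Algebra ℂ A₀]
    {A : Type*} [NormedRing A] [NormedAlgebra ℂ A] [CompleteSpace A] [NormOneClass A]
    (hss : IsSpectrallySemisimple A) (φ : A₀ →ₗ[ℂ] A) (hsur : Function.Surjective φ)
    (hφ : ∀ x y z : A₀, spectrum ℂ (φ x * φ y * φ z) = spectrum ℂ (x * y * z))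
    {x y : A₀} (hx : IsUnit x) (hy : IsUnit y) : φ 1 * φ (x * y) = φ x * φ y := by
  have hxy := (isUnit_map_of_isUnit_of_spectrum_triple_eq φ hφ hx).mul
    (isUnit_map_of_isUnit_of_spectrum_triple_eq φ hφ hy)
  refine eq_of_forall_spectrum_mul_eq hss hxy fun w => ?_
  obtain ⟨z, rfl⟩ := hsur w
  rw [hφ, hφ, one_mul]

theorem map_one_mul_map_mul
    {A₀ : Type*} [NormedRing A₀] [NormedAlgebra ℂ A₀] [CompleteSpace A₀] [NormOneClass A₀]
    {A : Type*} [NormedRing A] [NormedAlgebra ℂ A] [CompleteSpace A] [NormOneClass A]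
    (hss : IsSpectrallySemisimple A) (φ : A₀ →ₗ[ℂ] A) (hsur : Function.Surjective φ)
    (hφ : ∀ x y z : A₀, spectrum ℂ (φ x * φ y * φ z) = spectrum ℂ (x * y * z)) (x y : A₀) :
    φ 1 * φ (x * y) = φ x * φ y := by
  have hunit_right {y : A₀} (hy : IsUnit y) (x : A₀) : φ 1 * φ (x * y) = φ x * φ y :=
    eq_of_map_add_of_forall_isUnit ℂ (fun a b => by rw [add_mul, map_add, mul_add])
      (fun a b => by rw [map_add, add_mul])
      (fun x hx => map_one_mul_map_mul_of_isUnit hss φ hsur hφ hx hy) x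
  exact eq_of_map_add_of_forall_isUnit ℂ (f := fun y => φ 1 * φ (x * y))
    (fun a b => by rw [mul_add, map_add, mul_add]) (fun a b => by rw [map_add, mul_add])
    (fun y hy => hunit_right hy x) y

/-- Corollary 4.2: Let `φ : A₀ → A` be a surjective linear map into a
semisimple Banach algebra with `σ(φ(x) φ(y) φ(z)) = σ(x y z)` for all
`x, y, z`. Then `φ(1)` is central, `φ(1)³ = 1`, and
`φ(x y) = φ(1)² φ(x) φ(y)` for all `x, y`. -/
theorem surjective_linear_spectrum_triple_preserver
    {A₀ : Type*} [NormedRing A₀] [NormedAlgebra ℂ A₀] [CompleteSpace A₀] [NormOneClass A₀]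
    {A : Type*} [NormedRing A] [NormedAlgebra ℂ A] [CompleteSpace A] [NormOneClass A]
    (hss : ∀ a : A, (∀ x : A, spectrum ℂ (a * x) = {0}) → a = 0)
    (φ : A₀ →ₗ[ℂ] A) (hsur : Function.Surjective φ)
    (hφ : ∀ x y z : A₀, spectrum ℂ (φ x * φ y * φ z) = spectrum ℂ (x * y * z)) :
    φ 1 ∈ Set.center A ∧ (φ 1) ^ 3 = 1 ∧
      ∀ x y : A₀, φ (x * y) = (φ 1) ^ 2 * (φ x * φ y) := by
  have hmul := map_one_mul_map_mul hss φ hsur hφ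
  have hcomm (a : A) : Commute (φ 1) a := by
    obtain ⟨x, rfl⟩ := hsur a
    have h := hmul x 1
    rwa [mul_one] at h
  have hcube : φ 1 ^ 3 = 1 := by
    refine eq_one_of_forall_commute_of_spectrum_eq_one hss (fun w => (hcomm w).pow_left 3) ?_
    have : Nontrivial A₀ := NormOneClass.nontrivial
    rw [pow_three', hφ, mul_one, mul_one, spectrum.one_eq]
  refine ⟨Semigroup.mem_center_iff.2 fun a => (hcomm a).eq.symm, hcube, fun x y => ?_⟩
  calc φ (x * y) = φ 1 ^ 3 * φ (x * y) := by rw [hcube, one_mul]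
    _ = φ 1 ^ 2 * (φ x * φ y) := by rw [pow_succ, mul_assoc, hmul]
end

section
/- Let A₀ be a complex unital Banach algebra and A a unital C*-algebra. Let φ : A₀ → A be a surjective map (not assumed linear) satisfying σ(φ(x)·φ(y)·φ(z)) = σ(x·y·z) for all x, y, z ∈ A₀. Then φ(1) lies in the center Z(A) of A, φ(1)³ = 1, and φ(x·y) = φ(1)²·φ(x)·φ(y) for all x, y ∈ A₀. -/
/-!
The engine is a cancellation property of C⋆-algebras: if `σ(P b) = σ(Q b)` and
`σ(b P) = σ(b Q)` for every `b`, then `P = Q`. For such `P, Q` one has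
`σ(P⋆P t) \ {0} = σ(Q⋆Q t) \ {0}` for all `t`; conjugating by `(P⋆P + ε)^(-1/2)` turns this into
`Q⋆Q ≤ P⋆P + ε`, so `P⋆P = Q⋆Q`, and likewise `P P⋆ = Q Q⋆`. Then `N = P⋆Q` is normal with
`σ(N) = σ(Q⋆Q) ⊆ [0, ∞)` and `N⋆N = (Q⋆Q)²`, hence `N = Q⋆Q` and `(P - Q)⋆(P - Q) = 0`.

For the preserver, surjectivity writes every `b` as `φ w`, and the hypothesis shows that the pairs
`(φ 1 a, a φ 1)` and `(φ (x y) φ 1, φ x φ y)` satisfy both spectral identities. Cancellation makes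
`φ 1` central and gives `φ (x y) φ 1 = φ x φ y`. Finally `φ 1 ^ 3` is normal with
`σ(φ 1 ^ 3) = σ(1) ⊆ {1}`, so it is `1`.
-/

open CFC Filter Topology
open scoped ComplexOrder

namespace CStarAlgebra

local notation "σ" => spectrum ℂ

variable {A : Type*} [CStarAlgebra A]

lemma spectrum_star_mul_eq {P Q : A} (hL : ∀ b, σ (b * P) = σ (b * Q)) (b : A) :
    σ (star P * b) = σ (star Q * b) := by
  have h := congrArg star (hL (star b))
  rwa [← spectrum.map_star, ← spectrum.map_star, star_mul, star_mul, star_star] at h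

lemma spectrum_mul_star_eq {P Q : A} (hR : ∀ b, σ (P * b) = σ (Q * b)) (b : A) :
    σ (b * star P) = σ (b * star Q) := by
  have h := congrArg star (hR (star b))
  rwa [← spectrum.map_star, ← spectrum.map_star, star_mul, star_mul, star_star] at h

section Order

variable [PartialOrder A] [StarOrderedRing A]

lemma le_algebraMap_of_spectrum_diff_subset {V W : A} {r : ℝ} (hV : IsSelfAdjoint V)
    (hW : IsSelfAdjoint W) (hr : 0 ≤ r) (hVr : V ≤ algebraMap ℝ A r) (h : σ W \ {0} ⊆ σ V) :
    W ≤ algebraMap ℝ A r := by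
  rw [le_algebraMap_iff_spectrum_le hW]
  intro x hx
  rw [← spectrum.preimage_algebraMap ℂ] at hx
  by_cases hx0 : x = 0
  · exact hx0 ▸ hr
  · exact (le_algebraMap_iff_spectrum_le hV).mp hVr x
      ((spectrum.preimage_algebraMap ℂ).subset (h ⟨hx, by simpa using hx0⟩))

lemma le_of_spectrum_mul_diff_subset_of_isStrictlyPositive {X Y a : A} (hX : IsSelfAdjoint X)
    (hY : IsSelfAdjoint Y) (ha : IsStrictlyPositive a) (hXa : X ≤ a)
    (h : ∀ t, σ (Y * t) \ {0} ⊆ σ (X * t) \ {0}) : Y ≤ a := by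
  set c := a ^ (-(1 / 2) : ℝ)
  have hc : IsSelfAdjoint c := .of_nonneg rpow_nonneg
  have hsc : sqrt a * c = 1 := by
    rw [sqrt_eq_rpow, ← rpow_add ha.isUnit]; norm_num; exact rpow_zero a
  have hcs : c * sqrt a = 1 := by
    rw [sqrt_eq_rpow, ← rpow_add ha.isUnit]; norm_num; exact rpow_zero a
  have hV : c * X * c ≤ algebraMap ℝ A 1 := by
    rw [map_one, ← conjugate_rpow_neg_one_half a]
    exact hc.conjugate_le_conjugate hXa
  have hspec : σ (c * Y * c) \ {0} ⊆ σ (c * X * c) := by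
    calc σ (c * Y * c) \ {0} = σ (Y * (c * c)) \ {0} := by
          rw [mul_assoc, spectrum.nonzero_mul_comm, mul_assoc]
      _ ⊆ σ (X * (c * c)) \ {0} := h _
      _ = σ (c * X * c) \ {0} := by rw [← mul_assoc, spectrum.nonzero_mul_comm, ← mul_assoc]
      _ ⊆ σ (c * X * c) := Set.sdiff_subset
  have hW : c * Y * c ≤ 1 := by
    simpa using le_algebraMap_of_spectrum_diff_subset
      (by simpa [hc.star_eq] using hX.conjugate' c) (by simpa [hc.star_eq] using hY.conjugate' c)
      zero_le_one hV hspec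
  calc Y = sqrt a * (c * Y * c) * sqrt a := by
        simp only [← mul_assoc, hsc, one_mul]; rw [mul_assoc, hcs, mul_one]
    _ ≤ sqrt a * 1 * sqrt a := conjugate_le_conjugate_of_nonneg hW (sqrt_nonneg a)
    _ = a := by rw [mul_one, sqrt_mul_sqrt_self a ha.nonneg]

lemma le_of_spectrum_mul_diff_subset {X Y : A} (hX : 0 ≤ X) (hY : IsSelfAdjoint Y)
    (h : ∀ t, σ (Y * t) \ {0} ⊆ σ (X * t) \ {0}) : Y ≤ X := by
  have hlim : Tendsto (fun ε : ℝ => X + algebraMap ℝ A ε) (𝓝[>] 0) (𝓝 X) := by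
    have : Continuous fun ε : ℝ => X + algebraMap ℝ A ε := by fun_prop
    simpa using (this.tendsto 0).mono_left nhdsWithin_le_nhds
  refine ge_of_tendsto hlim (eventually_nhdsWithin_of_forall fun ε (hε : 0 < ε) => ?_)
  exact le_of_spectrum_mul_diff_subset_of_isStrictlyPositive (.of_nonneg hX) hY
    (IsStrictlyPositive.nonneg_add hX (isStrictlyPositive_algebraMap hε))
    (le_add_of_nonneg_right (isStrictlyPositive_algebraMap hε).nonneg) h

end Order

lemma star_mul_self_eq_of_spectrum_mul_eq {P Q : A} (hR : ∀ b, σ (P * b) = σ (Q * b))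
    (hL : ∀ b, σ (b * P) = σ (b * Q)) : star P * P = star Q * Q := by
  let := spectralOrder A
  let := spectralOrderedRing A
  have key : ∀ t, σ (star P * P * t) \ {0} = σ (star Q * Q * t) \ {0} := fun t => by
    calc σ (star P * P * t) \ {0}
        = σ (star Q * (P * t)) \ {0} := by rw [mul_assoc, spectrum_star_mul_eq hL]
      _ = σ (P * (t * star Q)) \ {0} := by rw [spectrum.nonzero_mul_comm, mul_assoc]
      _ = σ (t * (star Q * Q)) \ {0} := by
          rw [hR, spectrum.nonzero_mul_comm, mul_assoc]
      _ = σ (star Q * Q * t) \ {0} := spectrum.nonzero_mul_comm _ _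
  exact le_antisymm
    (le_of_spectrum_mul_diff_subset (star_mul_self_nonneg Q) (.star_mul_self P) (key · |>.subset))
    (le_of_spectrum_mul_diff_subset (star_mul_self_nonneg P) (.star_mul_self Q) (key · |>.superset))

theorem eq_of_spectrum_mul_eq {P Q : A} (hR : ∀ b, σ (P * b) = σ (Q * b))
    (hL : ∀ b, σ (b * P) = σ (b * Q)) : P = Q := by
  let := spectralOrder A
  let := spectralOrderedRing A
  have hPP : star P * P = star Q * Q := star_mul_self_eq_of_spectrum_mul_eq hR hL
  have hPP' : P * star P = Q * star Q := by
    simpa using star_mul_self_eq_of_spectrum_mul_eq (spectrum_star_mul_eq hL)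
      (spectrum_mul_star_eq hR)
  have hNN : star (star P * Q) * (star P * Q) = star Q * Q * (star Q * Q) := by
    calc star (star P * Q) * (star P * Q) = star Q * (P * star P) * Q := by simp [mul_assoc]
      _ = star Q * Q * (star Q * Q) := by rw [hPP']; simp only [mul_assoc]
  have hNN' : star P * Q * star (star P * Q) = star Q * Q * (star Q * Q) := by
    calc star P * Q * star (star P * Q) = star P * (Q * star Q) * P := by simp [mul_assoc]
      _ = star Q * Q * (star Q * Q) := by rw [← hPP', ← hPP]; simp only [mul_assoc]
  have : IsStarNormal (star P * Q) := ⟨hNN.trans hNN'.symm⟩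
  have hN : 0 ≤ star P * Q := by
    rw [StarOrderedRing.nonneg_iff_spectrum_nonneg (R := ℂ) _]
    simpa [spectrum_star_mul_eq hL] using spectrum_nonneg_of_nonneg (star_mul_self_nonneg Q)
  have hNQ : star P * Q = star Q * Q :=
    (mul_self_eq_mul_self_iff _ _ hN (star_mul_self_nonneg Q)).mp
      (by rw [← hNN, hN.isSelfAdjoint.star_eq])
  have hQP : star Q * P = star Q * Q := by simpa using congrArg star hNQ
  have : star (P - Q) * (P - Q) = 0 := by
    rw [star_sub, sub_mul, mul_sub, mul_sub, hPP, hNQ, hQP]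
    abel
  simpa [sub_eq_zero] using (CStarRing.star_mul_self_eq_zero_iff _).mp this

end CStarAlgebra

def PreservesTripleProductSpectrum {A₀ A : Type*} [Ring A₀] [Algebra ℂ A₀] [Ring A]
    [Algebra ℂ A] (φ : A₀ → A) : Prop :=
  ∀ x y z, spectrum ℂ (φ x * φ y * φ z) = spectrum ℂ (x * y * z)

namespace PreservesTripleProductSpectrum

variable {A₀ A : Type*} [Ring A₀] [Algebra ℂ A₀] [CStarAlgebra A] {φ : A₀ → A}

lemma commute_map_one (hφ : PreservesTripleProductSpectrum φ)
    (hsur : Function.Surjective φ) (a : A) : Commute (φ 1) a := by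
  obtain ⟨y, rfl⟩ := hsur a
  refine CStarAlgebra.eq_of_spectrum_mul_eq (fun b => ?_) (fun b => ?_)
  all_goals obtain ⟨z, rfl⟩ := hsur b
  · rw [hφ, hφ, one_mul, mul_one]
  · rw [← mul_assoc, ← mul_assoc, hφ, hφ, mul_one, mul_one]

lemma map_one_pow_three (hφ : PreservesTripleProductSpectrum φ)
    (hsur : Function.Surjective φ) : φ 1 ^ 3 = 1 := by
  have : IsStarNormal (φ 1 ^ 3) := ⟨((hφ.commute_map_one hsur _).pow_left 3).symm⟩
  refine CFC.eq_one_of_spectrum_subset_one (R := ℂ) (φ 1 ^ 3) ?_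
  rw [pow_three', hφ, mul_one, mul_one]
  rcases subsingleton_or_nontrivial A₀ with _ | _
  · simp
  · rw [spectrum.one_eq]

lemma map_mul_mul_map_one (hφ : PreservesTripleProductSpectrum φ)
    (hsur : Function.Surjective φ) (x y : A₀) : φ (x * y) * φ 1 = φ x * φ y := by
  refine CStarAlgebra.eq_of_spectrum_mul_eq (fun b => ?_) (fun b => ?_)
  all_goals obtain ⟨w, rfl⟩ := hsur b
  · rw [hφ, hφ, mul_one]
  · rw [← mul_assoc, ← mul_assoc, hφ, hφ, mul_one, mul_assoc]

end PreservesTripleProductSpectrum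

theorem surjective_spectrum_triple_preserver_cstar_general
    {A₀ : Type*} [NormedRing A₀] [NormedAlgebra ℂ A₀]
    {A : Type*} [NormedRing A] [StarRing A] [CStarRing A] [CompleteSpace A]
    [NormedAlgebra ℂ A] [StarModule ℂ A]
    (φ : A₀ → A) (hsur : Function.Surjective φ)
    (hφ : ∀ x y z : A₀, spectrum ℂ (φ x * φ y * φ z) = spectrum ℂ (x * y * z)) :
    φ 1 ∈ Set.center A ∧ (φ 1) ^ 3 = 1 ∧
      ∀ x y : A₀, φ (x * y) = (φ 1) ^ 2 * (φ x * φ y) := by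
  let _ : CStarAlgebra A := {}
  have hφ : PreservesTripleProductSpectrum φ := hφ
  have hcomm := hφ.commute_map_one hsur
  have hcube := hφ.map_one_pow_three hsur
  refine ⟨Semigroup.mem_center_iff.mpr fun a => (hcomm a).eq.symm, hcube, fun x y => ?_⟩
  calc φ (x * y) = φ (x * y) * φ 1 ^ 3 := by rw [hcube, mul_one]
    _ = φ 1 ^ 2 * (φ (x * y) * φ 1) := by
        rw [pow_succ, ← mul_assoc, ← ((hcomm _).pow_left 2).eq, mul_assoc]
    _ = φ 1 ^ 2 * (φ x * φ y) := by rw [hφ.map_mul_mul_map_one hsur]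

/-- Corollary 4.3: Let `φ : A₀ → A` be a surjective map from a Banach algebra
onto a C*-algebra with `σ(φ(x) φ(y) φ(z)) = σ(x y z)` for all `x, y, z`. Then
`φ(1)` is central, `φ(1)³ = 1`, and `φ(x y) = φ(1)² φ(x) φ(y)` for all
`x, y`. -/
theorem surjective_spectrum_triple_preserver_cstar
    {A₀ : Type*} [NormedRing A₀] [NormedAlgebra ℂ A₀] [CompleteSpace A₀] [NormOneClass A₀]
    {A : Type*} [NormedRing A] [StarRing A] [CStarRing A] [CompleteSpace A]
    [NormedAlgebra ℂ A] [StarModule ℂ A]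
    (φ : A₀ → A) (hsur : Function.Surjective φ)
    (hφ : ∀ x y z : A₀, spectrum ℂ (φ x * φ y * φ z) = spectrum ℂ (x * y * z)) :
    φ 1 ∈ Set.center A ∧ (φ 1) ^ 3 = 1 ∧
      ∀ x y : A₀, φ (x * y) = (φ 1) ^ 2 * (φ x * φ y) :=
  surjective_spectrum_triple_preserver_cstar_general φ hsur hφ
end
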